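/- arXiv:2402.07337 — 9 statements merged into one kernel-verified Lean document; each statement's English description precedes it below -/
import Mathlib

section
/- Let G be a group, z ∈ Z(G), and x, y ∈ G with [x,y] = z^{e²} for some e. Then for all i, j ∈ ℤ and N ∈ ℕ, (x⁻¹zⁱ)ᴺ(y⁻¹zʲ)ᴺ xᴺ yᴺ = z^{(i+j)N + e²N²}. -/
theorem stmt_4 {G : Type*} [Group G] (x y z : G) (e : ℕ)
    (hcent : z ∈ Subgroup.center G) (h : x⁻¹ * y⁻¹ * x * y = z ^ (e ^ 2)) :
    ∀ (i j : ℤ) (N : ℕ),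
      (x⁻¹ * z ^ i) ^ N * (y⁻¹ * z ^ j) ^ N * x ^ N * y ^ N =
        z ^ ((i + j) * (N : ℤ) + (e : ℤ) ^ 2 * (N : ℤ) ^ 2) := by
  have hz : ∀ g : G, Commute z g := fun g =>
    ((Subgroup.mem_center_iff.mp hcent g).symm)
  have hxy : x * y = y * x * z ^ (e ^ 2) := by
    rw [← h]; group
  have hA : ∀ N : ℕ, x ^ N * y = y * x ^ N * z ^ (e ^ 2 * N) := by
    intro N
    induction N with
    | zero => simp
    | succ n ih =>
      have h1 : x ^ (n + 1) * y = x * (x ^ n * y) := by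
        rw [pow_succ']; group
      rw [h1, ih, ← mul_assoc, ← mul_assoc, hxy]
      have hc : z ^ (e ^ 2) * x ^ n = x ^ n * z ^ (e ^ 2) :=
        ((hz (x ^ n)).pow_left (e ^ 2)).eq
      calc y * x * z ^ (e ^ 2) * x ^ n * z ^ (e ^ 2 * n)
          = y * x * (z ^ (e ^ 2) * x ^ n) * z ^ (e ^ 2 * n) := by group
        _ = y * x * (x ^ n * z ^ (e ^ 2)) * z ^ (e ^ 2 * n) := by rw [hc]
        _ = y * (x * x ^ n) * (z ^ (e ^ 2) * z ^ (e ^ 2 * n)) := by group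
        _ = y * x ^ (n + 1) * z ^ (e ^ 2 * (n + 1)) := by
            rw [← pow_succ', ← pow_add]; ring_nf
  have hB : ∀ N M : ℕ, x ^ N * y ^ M = y ^ M * x ^ N * z ^ (e ^ 2 * N * M) := by
    intro N M
    induction M with
    | zero => simp
    | succ m ih =>
      have h1 : x ^ N * y ^ (m + 1) = (x ^ N * y ^ m) * y := by
        rw [pow_succ]; group
      rw [h1, ih]
      have hc : z ^ (e ^ 2 * N * m) * y = y * z ^ (e ^ 2 * N * m) :=
        ((hz y).pow_left _).eq
      calc y ^ m * x ^ N * z ^ (e ^ 2 * N * m) * y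
          = y ^ m * (x ^ N * (z ^ (e ^ 2 * N * m) * y)) := by group
        _ = y ^ m * (x ^ N * (y * z ^ (e ^ 2 * N * m))) := by rw [hc]
        _ = y ^ m * (x ^ N * y) * z ^ (e ^ 2 * N * m) := by group
        _ = y ^ m * (y * x ^ N * z ^ (e ^ 2 * N)) * z ^ (e ^ 2 * N * m) := by rw [hA N]
        _ = (y ^ m * y) * x ^ N * (z ^ (e ^ 2 * N) * z ^ (e ^ 2 * N * m)) := by group
        _ = y ^ (m + 1) * x ^ N * z ^ (e ^ 2 * N * (m + 1)) := by
            rw [← pow_succ, ← pow_add]; ring_nf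
  intro i j N
  have hkey : x⁻¹ ^ N * y⁻¹ ^ N * x ^ N * y ^ N = z ^ (e ^ 2 * N * N) := by
    have := hB N N
    have h2 : y ^ N * x ^ N * z ^ (e ^ 2 * N * N) = x ^ N * y ^ N := this.symm
    calc x⁻¹ ^ N * y⁻¹ ^ N * x ^ N * y ^ N
        = x⁻¹ ^ N * y⁻¹ ^ N * (x ^ N * y ^ N) := by group
      _ = x⁻¹ ^ N * y⁻¹ ^ N * (y ^ N * x ^ N * z ^ (e ^ 2 * N * N)) := by rw [h2]
      _ = z ^ (e ^ 2 * N * N) := by group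
  have e1 : (x⁻¹ * z ^ i) ^ N = x⁻¹ ^ N * z ^ (i * N) := by
    rw [((hz x⁻¹).zpow_left i).symm.mul_pow, ← zpow_natCast (z ^ i), ← zpow_mul]
  have e2 : (y⁻¹ * z ^ j) ^ N = y⁻¹ ^ N * z ^ (j * N) := by
    rw [((hz y⁻¹).zpow_left j).symm.mul_pow, ← zpow_natCast (z ^ j), ← zpow_mul]
  rw [e1, e2]
  have c1 : z ^ (i * N) * y⁻¹ ^ N = y⁻¹ ^ N * z ^ (i * N) :=
    (((hz y⁻¹).pow_right N).zpow_left _).eq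
  have c2 : ∀ (k : ℤ) (g : G), z ^ k * g = g * z ^ k := fun k g => ((hz g).zpow_left k).eq
  calc x⁻¹ ^ N * z ^ (i * N) * (y⁻¹ ^ N * z ^ (j * N)) * x ^ N * y ^ N
      = x⁻¹ ^ N * (z ^ (i * N) * y⁻¹ ^ N) * z ^ (j * N) * x ^ N * y ^ N := by group
    _ = x⁻¹ ^ N * (y⁻¹ ^ N * z ^ (i * N)) * z ^ (j * N) * x ^ N * y ^ N := by rw [c1]
    _ = x⁻¹ ^ N * y⁻¹ ^ N * (z ^ (i * N) * z ^ (j * N) * x ^ N) * y ^ N := by group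
    _ = x⁻¹ ^ N * y⁻¹ ^ N * (x ^ N * (z ^ (i * N) * z ^ (j * N))) * y ^ N := by
        rw [← zpow_add, c2]
    _ = x⁻¹ ^ N * y⁻¹ ^ N * x ^ N * (z ^ (i * N + j * N) * y ^ N) := by
        rw [zpow_add]; group
    _ = x⁻¹ ^ N * y⁻¹ ^ N * x ^ N * (y ^ N * z ^ (i * N + j * N)) := by rw [c2]
    _ = (x⁻¹ ^ N * y⁻¹ ^ N * x ^ N * y ^ N) * z ^ (i * N + j * N) := by group
    _ = z ^ (e ^ 2 * N * N) * z ^ (i * N + j * N) := by rw [hkey]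
    _ = z ^ ((i + j) * (N : ℤ) + (e : ℤ) ^ 2 * (N : ℤ) ^ 2) := by
        rw [← zpow_natCast z (e ^ 2 * N * N), ← zpow_add]
        congr 1
        push_cast
        ring
end

section
/- Let G be a group, x, y ∈ G, z ∈ Z(G) with [x,y] = z^{e²} for some e ∈ ℕ. Then for all i, j ∈ ℤ and N ∈ ℕ, (y⁻¹zʲ)ᴺ(x⁻¹zⁱ)ᴺ yᴺ xᴺ = z^{(i+j)N - e²N²}. -/
theorem stmt_5 {G : Type*} [Group G] (x y z : G) (e : ℕ)
    (hcent : z ∈ Subgroup.center G) (h : x⁻¹ * y⁻¹ * x * y = z ^ (e ^ 2)) :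
    ∀ (i j : ℤ) (N : ℕ),
      (y⁻¹ * z ^ j) ^ N * (x⁻¹ * z ^ i) ^ N * y ^ N * x ^ N =
        z ^ ((i + j) * (N : ℤ) - (e : ℤ) ^ 2 * (N : ℤ) ^ 2) := by
  intro i j N
  have hcz : ∀ g : G, Commute g z := fun g => Subgroup.mem_center_iff.mp hcent g
  have hxy : x * y = y * x * z ^ (e ^ 2) := by
    rw [← h]; group
  -- x^m * y = y * x^m * z^(e^2 * m)
  have A : ∀ m : ℕ, x ^ m * y = y * x ^ m * z ^ (e ^ 2 * m) := by
    intro m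
    induction m with
    | zero => simp
    | succ m ih =>
      have hzx : z ^ (e ^ 2) * x ^ m = x ^ m * z ^ (e ^ 2) :=
        ((hcz (x ^ m)).pow_right (e ^ 2)).symm
      calc x ^ (m + 1) * y = x * (x ^ m * y) := by rw [pow_succ']; group
        _ = x * (y * x ^ m * z ^ (e ^ 2 * m)) := by rw [ih]
        _ = (x * y) * x ^ m * z ^ (e ^ 2 * m) := by group
        _ = y * x * (z ^ (e ^ 2) * x ^ m) * z ^ (e ^ 2 * m) := by rw [hxy]; group
        _ = y * x ^ (m + 1) * (z ^ (e ^ 2) * z ^ (e ^ 2 * m)) := by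
              rw [hzx, pow_succ']; group
        _ = y * x ^ (m + 1) * z ^ (e ^ 2 * (m + 1)) := by
              rw [← pow_add]; ring_nf
  -- x^m * y^n = y^n * x^m * z^(e^2 * m * n)
  have B : ∀ m n : ℕ, x ^ m * y ^ n = y ^ n * x ^ m * z ^ (e ^ 2 * m * n) := by
    intro m n
    induction n with
    | zero => simp
    | succ n ih =>
      have hzy : z ^ (e ^ 2 * m * n) * y = y * z ^ (e ^ 2 * m * n) :=
        ((hcz y).symm.pow_left _).eq
      calc x ^ m * y ^ (n + 1) = (x ^ m * y ^ n) * y := by rw [pow_succ]; group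
        _ = y ^ n * x ^ m * (z ^ (e ^ 2 * m * n) * y) := by rw [ih]; group
        _ = y ^ n * (x ^ m * y) * z ^ (e ^ 2 * m * n) := by rw [hzy]; group
        _ = y ^ n * (y * x ^ m * z ^ (e ^ 2 * m)) * z ^ (e ^ 2 * m * n) := by rw [A m]
        _ = y ^ (n + 1) * x ^ m * z ^ (e ^ 2 * m * (n + 1)) := by
              rw [pow_succ, mul_add, pow_add]; group
  -- rewrite the mixed-power pieces
  have hyz : (y⁻¹ * z ^ j) ^ N = (y ^ N)⁻¹ * z ^ (j * (N : ℤ)) := by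
    rw [((hcz y⁻¹).zpow_right j).mul_pow, inv_pow, ← zpow_natCast (z ^ j),
      ← zpow_mul]
  have hxz : (x⁻¹ * z ^ i) ^ N = (x ^ N)⁻¹ * z ^ (i * (N : ℤ)) := by
    rw [((hcz x⁻¹).zpow_right i).mul_pow, inv_pow, ← zpow_natCast (z ^ i),
      ← zpow_mul]
  have hB := B N N
  have hcomm : (y ^ N)⁻¹ * (x ^ N)⁻¹ * y ^ N * x ^ N = (z ^ (e ^ 2 * N * N))⁻¹ := by
    have h1 : (y ^ N)⁻¹ * (x ^ N)⁻¹ * (x ^ N * y ^ N) = 1 := by group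
    rw [hB] at h1
    calc (y ^ N)⁻¹ * (x ^ N)⁻¹ * y ^ N * x ^ N
        = (y ^ N)⁻¹ * (x ^ N)⁻¹ * (y ^ N * x ^ N * z ^ (e ^ 2 * N * N)) *
            (z ^ (e ^ 2 * N * N))⁻¹ := by group
      _ = 1 * (z ^ (e ^ 2 * N * N))⁻¹ := by rw [h1]
      _ = (z ^ (e ^ 2 * N * N))⁻¹ := one_mul _
  rw [hyz, hxz]
  have hzc1 : z ^ (j * (N : ℤ)) * ((x ^ N)⁻¹ * z ^ (i * (N : ℤ))) =
      (x ^ N)⁻¹ * z ^ (i * (N : ℤ)) * z ^ (j * (N : ℤ)) :=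
    ((hcz _).symm.zpow_left _).eq
  calc (y ^ N)⁻¹ * z ^ (j * (N : ℤ)) * ((x ^ N)⁻¹ * z ^ (i * (N : ℤ))) * y ^ N * x ^ N
      = (y ^ N)⁻¹ * ((x ^ N)⁻¹ * z ^ (i * (N : ℤ)) * z ^ (j * (N : ℤ))) * y ^ N * x ^ N := by
        rw [mul_assoc ((y ^ N)⁻¹), hzc1]
    _ = (y ^ N)⁻¹ * (x ^ N)⁻¹ * (z ^ (i * (N : ℤ) + j * (N : ℤ)) * y ^ N) * x ^ N := by
        rw [zpow_add]; group
    _ = (y ^ N)⁻¹ * (x ^ N)⁻¹ * (y ^ N * z ^ (i * (N : ℤ) + j * (N : ℤ))) * x ^ N := by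
        rw [((hcz (y ^ N)).symm.zpow_left (i * (N:ℤ) + j * (N:ℤ))).eq]
    _ = ((y ^ N)⁻¹ * (x ^ N)⁻¹ * y ^ N * x ^ N) * (x ^ N)⁻¹ *
          (z ^ (i * (N : ℤ) + j * (N : ℤ)) * x ^ N) := by group
    _ = (z ^ (e ^ 2 * N * N))⁻¹ * (x ^ N)⁻¹ *
          (x ^ N * z ^ (i * (N : ℤ) + j * (N : ℤ))) := by
        rw [hcomm, ((hcz (x ^ N)).symm.zpow_left (i * (N:ℤ) + j * (N:ℤ))).eq]
    _ = (z ^ (e ^ 2 * N * N))⁻¹ * z ^ (i * (N : ℤ) + j * (N : ℤ)) := by group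
    _ = z ^ ((i + j) * (N : ℤ) - (e : ℤ) ^ 2 * (N : ℤ) ^ 2) := by
        rw [← zpow_natCast z (e ^ 2 * N * N), ← zpow_neg, ← zpow_add]
        congr 1
        push_cast
        ring
end

section
/- Let G be a group, N ⊴ G a normal subgroup, and M a submonoid of G. If both M ∩ N and MN are subgroups of G (i.e., closed under inverses), then M is a subgroup of G. -/
open scoped Pointwise

theorem stmt_8 {G : Type*} [Group G] (N : Subgroup G) [N.Normal] (M : Submonoid G)
    (hMN : ∀ m ∈ M, m ∈ N → m⁻¹ ∈ M)
    (hprod : ∀ g ∈ (M : Set G) * (N : Set G), g⁻¹ ∈ (M : Set G) * (N : Set G)) :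
    ∀ m ∈ M, m⁻¹ ∈ M := by
  intro m hm
  have hmem : m ∈ (M : Set G) * (N : Set G) :=
    ⟨m, hm, 1, N.one_mem, mul_one m⟩
  obtain ⟨m', hm', n, hn, heq⟩ := hprod m hmem
  -- m⁻¹ = m' * n, so m * m' = n⁻¹ ∈ M ∩ N
  have h1 : m * m' = n⁻¹ := by
    have : m' * n = m⁻¹ := heq
    have hm2 : m = n⁻¹ * m'⁻¹ := by rw [← mul_inv_rev, this, inv_inv]
    rw [hm2]; group
  have h2 : m * m' ∈ M := M.mul_mem hm hm'
  have h3 : m * m' ∈ N := h1 ▸ N.inv_mem hn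
  have h4 : (m * m')⁻¹ ∈ M := hMN _ h2 h3
  have h5 : n ∈ M := by rwa [h1, inv_inv] at h4
  have : m⁻¹ = m' * n := heq.symm
  rw [this]; exact M.mul_mem hm' h5
end

section
/- Let G be a group, M a submonoid of G, and z = [x,y] for some x, y ∈ G with z ∈ Z(G). If the set M⟨z⟩ is a finite-index subgroup of G, then M is a finite-index subgroup of G. -/
lemma aux_comm1 {G : Type*} [Group G] {x y z : G}
    (hz : z = x⁻¹ * y⁻¹ * x * y) (hC : ∀ g : G, Commute z g) :
    ∀ p : ℕ, (y ^ p)⁻¹ * x * y ^ p = x * z ^ p := by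
  intro p
  induction p with
  | zero => simp
  | succ p ih =>
    have hxy : y⁻¹ * x * y = x * z := by rw [hz]; group
    have hcom : z ^ p * y = y * z ^ p := ((hC y).pow_left p).eq
    calc (y ^ (p+1))⁻¹ * x * y ^ (p+1)
        = y⁻¹ * ((y ^ p)⁻¹ * x * y ^ p) * y := by rw [pow_succ]; group
      _ = y⁻¹ * (x * z ^ p) * y := by rw [ih]
      _ = (y⁻¹ * x * y) * z ^ p := by rw [mul_assoc, mul_assoc, hcom]; group
      _ = x * z ^ (p+1) := by rw [hxy, pow_succ]; group

lemma aux_comm2 {G : Type*} [Group G] {x y z : G}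
    (hz : z = x⁻¹ * y⁻¹ * x * y) (hC : ∀ g : G, Commute z g) :
    ∀ p q : ℕ, (x ^ q)⁻¹ * (y ^ p)⁻¹ * x ^ q * y ^ p = z ^ (q * p) := by
  intro p q
  have key : ∀ q : ℕ, (y ^ p)⁻¹ * x ^ q * y ^ p = x ^ q * z ^ (q * p) := by
    intro q
    induction q with
    | zero => simp
    | succ q ih =>
      have h1 := aux_comm1 hz hC p
      calc (y ^ p)⁻¹ * x ^ (q+1) * y ^ p
          = ((y ^ p)⁻¹ * x ^ q * y ^ p) * ((y ^ p)⁻¹ * x * y ^ p) := by rw [pow_succ]; group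
        _ = (x ^ q * z ^ (q*p)) * (x * z ^ p) := by rw [ih, h1]
        _ = x ^ q * (z ^ (q*p) * x) * z ^ p := by group
        _ = x ^ q * (x * z ^ (q*p)) * z ^ p := by rw [((hC x).pow_left (q*p)).eq]
        _ = x ^ (q+1) * z ^ ((q+1) * p) := by
            rw [pow_succ, add_mul, one_mul, pow_add]; group
  have := key q
  calc (x ^ q)⁻¹ * (y ^ p)⁻¹ * x ^ q * y ^ p
      = (x ^ q)⁻¹ * ((y ^ p)⁻¹ * x ^ q * y ^ p) := by group
    _ = (x ^ q)⁻¹ * (x ^ q * z ^ (q*p)) := by rw [this]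
    _ = z ^ (q * p) := by group

open scoped Pointwise

theorem stmt_9 {G : Type*} [Group G] (M : Submonoid G) (x y z : G)
    (hz : z = x⁻¹ * y⁻¹ * x * y) (hcent : z ∈ Subgroup.center G)
    (h : ∃ H : Subgroup G,
      (H : Set G) = (M : Set G) * ((Subgroup.zpowers z : Subgroup G) : Set G) ∧
      H.FiniteIndex) :
    ∃ K : Subgroup G, (K : Set G) = (M : Set G) ∧ K.FiniteIndex := by
  obtain ⟨H, hH, hHfin⟩ := h
  have hC : ∀ g : G, Commute z g := fun g => ((Subgroup.mem_center_iff.mp hcent) g).symm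
  -- z-power shuffle
  have hzc : ∀ (g : G) (k : ℤ), z ^ k * g = g * z ^ k := fun g k => ((hC g).zpow_left k).eq
  have step : ∀ (a b : G) (p q : ℤ), (a * z ^ p) * (b * z ^ q) = (a * b) * z ^ (p + q) := by
    intro a b p q
    rw [zpow_add, mul_assoc a, ← mul_assoc (z ^ p), hzc b p]
    group
  -- membership characterization
  have hmem : ∀ g : G, g ∈ H ↔ ∃ m ∈ M, ∃ k : ℤ, (m : G) * z ^ k = g := by
    intro g
    rw [← SetLike.mem_coe, hH, Set.mem_mul]
    constructor
    · rintro ⟨a, ha, b, hb, rfl⟩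
      obtain ⟨k, rfl⟩ := Subgroup.mem_zpowers_iff.mp hb
      exact ⟨a, ha, k, rfl⟩
    · rintro ⟨m, hm, k, rfl⟩
      exact ⟨m, hm, z ^ k, Subgroup.zpow_mem _ (Subgroup.mem_zpowers z) k, rfl⟩
  have hMH : ∀ g : G, g ∈ M → g ∈ H := fun g hg => (hmem g).mpr ⟨g, hg, 0, by simp⟩
  have hzH : z ∈ H := (hmem z).mpr ⟨1, M.one_mem, 1, by simp⟩
  -- powers of x and y in H
  set n := H.normalCore.index with hn_def
  haveI : H.normalCore.FiniteIndex := inferInstance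
  have hn : n ≠ 0 := Subgroup.FiniteIndex.index_ne_zero
  have hxH : x ^ n ∈ H := H.normalCore_le (Subgroup.pow_index_mem _ x)
  have hyH : y ^ n ∈ H := H.normalCore_le (Subgroup.pow_index_mem _ y)
  obtain ⟨m₁, hm₁, k₁, hx1⟩ := (hmem _).mp hxH
  obtain ⟨m₂, hm₂, k₂, hy1⟩ := (hmem _).mp hyH
  obtain ⟨m₁', hm₁', j₁, hx2⟩ := (hmem _).mp (H.inv_mem (hMH _ hm₁))
  obtain ⟨m₂', hm₂', j₂, hy2⟩ := (hmem _).mp (H.inv_mem (hMH _ hm₂))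
  -- pow of (m * z^k)
  have hpow : ∀ (m : G) (k : ℤ) (c : ℕ), (m * z ^ k) ^ c = m ^ c * z ^ (k * c) := by
    intro m k c
    rw [((hC m).zpow_left k).symm.mul_pow c, ← zpow_natCast (z ^ k) c, ← zpow_mul]
  -- decomposition of inverses of x^n, y^n
  have hxinv : (x ^ n)⁻¹ = m₁' * z ^ (j₁ - k₁) := by
    rw [← hx1, mul_inv_rev, ← hx2, ← zpow_neg, ← mul_assoc, hzc m₁' (-k₁), mul_assoc,
      ← zpow_add, show -k₁ + j₁ = j₁ - k₁ by omega]
  have hyinv : (y ^ n)⁻¹ = m₂' * z ^ (j₂ - k₂) := by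
    rw [← hy1, mul_inv_rev, ← hy2, ← zpow_neg, ← mul_assoc, hzc m₂' (-k₂), mul_assoc,
      ← zpow_add, show -k₂ + j₂ = j₂ - k₂ by omega]
  have hxc : ∀ c : ℕ, x ^ (n*c) = m₁ ^ c * z ^ (k₁ * c) := by
    intro c; rw [pow_mul, ← hx1, hpow]
  have hxc' : ∀ c : ℕ, (x ^ (n*c))⁻¹ = m₁' ^ c * z ^ ((j₁ - k₁) * c) := by
    intro c; rw [pow_mul, ← inv_pow, hxinv, hpow]
  have hyc : ∀ d : ℕ, y ^ (n*d) = m₂ ^ d * z ^ (k₂ * d) := by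
    intro d; rw [pow_mul, ← hy1, hpow]
  have hyc' : ∀ d : ℕ, (y ^ (n*d))⁻¹ = m₂' ^ d * z ^ ((j₂ - k₂) * d) := by
    intro d; rw [pow_mul, ← inv_pow, hyinv, hpow]
  have keypos : ∀ c d : ℕ, z ^ ((n : ℤ) * c * ((n:ℤ) * d) - j₁ * c - j₂ * d) ∈ M := by
    intro c d
    have h0 := aux_comm2 hz hC (n*d) (n*c)
    rw [hxc' c, hyc' d, hxc c, hyc d, step, step, step] at h0
    have h4 := eq_mul_inv_of_mul_eq h0
    rw [← zpow_neg, ← zpow_natCast z ((n*c)*(n*d)), ← zpow_add] at h4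
    have h5 : ((n:ℤ) * c * ((n:ℤ) * d) - j₁ * c - j₂ * d)
        = ((((n*c)*(n*d) : ℕ) : ℤ) + -((j₁-k₁)*(c:ℤ) + (j₂-k₂)*(d:ℤ) + k₁*c + k₂*d)) := by
      push_cast; ring
    rw [h5, ← h4]
    exact mul_mem (mul_mem (mul_mem (M.pow_mem hm₁' c) (M.pow_mem hm₂' d))
      (M.pow_mem hm₁ c)) (M.pow_mem hm₂ d)
  have hz' : z⁻¹ = y⁻¹ * x⁻¹ * y * x := by rw [hz]; group
  have hC' : ∀ g : G, Commute z⁻¹ g := fun g => (hC g).inv_left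
  have keyneg : ∀ c d : ℕ, z ^ (-((n : ℤ) * c * ((n:ℤ) * d)) - j₁ * c - j₂ * d) ∈ M := by
    intro c d
    have h0 := aux_comm2 hz' hC' (n*c) (n*d)
    rw [hyc' d, hxc' c, hyc d, hxc c, step, step, step] at h0
    have h4 := eq_mul_inv_of_mul_eq h0
    rw [inv_pow, ← zpow_natCast z ((n*d)*(n*c)), ← zpow_neg, ← zpow_neg, ← zpow_add] at h4
    have h5 : (-((n:ℤ) * c * ((n:ℤ) * d)) - j₁ * c - j₂ * d)
        = (-((((n*d)*(n*c) : ℕ) : ℤ)) + -((j₂-k₂)*(d:ℤ) + (j₁-k₁)*(c:ℤ) + k₂*d + k₁*c)) := by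
      push_cast; ring
    rw [h5, ← h4]
    exact mul_mem (mul_mem (mul_mem (M.pow_mem hm₂' d) (M.pow_mem hm₁' c))
      (M.pow_mem hm₂ d)) (M.pow_mem hm₁ c)
  -- choose a big parameter t
  set t : ℕ := (j₁ + j₂).natAbs + 1 with ht_def
  have hT : ((j₁ + j₂).natAbs : ℤ) = |j₁ + j₂| := Int.abs_eq_natAbs _ |>.symm
  have hn1 : 1 ≤ (n:ℤ) := by exact_mod_cast Nat.one_le_iff_ne_zero.mpr hn
  have htpos : 1 ≤ (t:ℤ) := by omega
  have ht1 : j₁ + j₂ < (t:ℤ) := by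
    have := le_abs_self (j₁ + j₂); omega
  have ht2 : -((t:ℤ)) < j₁ + j₂ := by
    have := neg_abs_le (j₁ + j₂); omega
  have htpos0 : (0:ℤ) < t := by omega
  have hnt : (t:ℤ) ≤ (n:ℤ) * t := le_mul_of_one_le_left htpos0.le hn1
  have hsq : (t:ℤ) * t ≤ (n:ℤ) * t * ((n:ℤ) * t) :=
    mul_le_mul hnt hnt htpos0.le (by positivity)
  have hjt : (j₁ + j₂) * t < t * t := mul_lt_mul_of_pos_right ht1 htpos0
  have hjt2 : -((t:ℤ) * t) < (j₁ + j₂) * t := by nlinarith [mul_lt_mul_of_pos_right ht2 htpos0]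
  have hPpos : 0 < (n : ℤ) * t * ((n:ℤ) * t) - j₁ * t - j₂ * t := by nlinarith
  have hQpos : 0 < -(-((n : ℤ) * t * ((n:ℤ) * t)) - j₁ * t - j₂ * t) := by nlinarith
  set P : ℕ := ((n : ℤ) * t * ((n:ℤ) * t) - j₁ * t - j₂ * t).toNat with hP_def
  set Q : ℕ := (-(-((n : ℤ) * t * ((n:ℤ) * t)) - j₁ * t - j₂ * t)).toNat with hQ_def
  have hPc : (P : ℤ) = (n : ℤ) * t * ((n:ℤ) * t) - j₁ * t - j₂ * t :=
    Int.toNat_of_nonneg hPpos.le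
  have hQc : (Q : ℤ) = -(-((n : ℤ) * t * ((n:ℤ) * t)) - j₁ * t - j₂ * t) :=
    Int.toNat_of_nonneg hQpos.le
  have hPpos' : 0 < P := by omega
  have hQpos' : 0 < Q := by omega
  have hzP : z ^ P ∈ M := by
    have := keypos t t
    rwa [← hPc, zpow_natCast] at this
  have hzQ : z⁻¹ ^ Q ∈ M := by
    have := keyneg t t
    rw [show (-((n : ℤ) * t * ((n:ℤ) * t)) - j₁ * t - j₂ * t) = -(Q:ℤ) by omega] at this
    rwa [zpow_neg, ← inv_zpow, zpow_natCast] at this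
  set N : ℕ := P * Q with hN_def
  have hNpos : 0 < N := Nat.mul_pos hPpos' hQpos'
  have hzN : z ^ N ∈ M := by rw [hN_def, pow_mul]; exact M.pow_mem hzP Q
  have hzN' : z⁻¹ ^ N ∈ M := by
    rw [hN_def, Nat.mul_comm, pow_mul]; exact M.pow_mem hzQ P
  -- all multiples of N
  have hzNk : ∀ k : ℤ, z ^ ((N:ℤ) * k) ∈ M := by
    intro k
    rcases le_or_gt 0 k with hk | hk
    · have h1 : ((N * k.toNat : ℕ) : ℤ) = (N:ℤ) * k := by
        push_cast [Int.toNat_of_nonneg hk]; ring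
      rw [← h1, zpow_natCast, pow_mul]
      exact M.pow_mem hzN _
    · have h1 : ((N * (-k).toNat : ℕ) : ℤ) = -((N:ℤ) * k) := by
        push_cast [Int.toNat_of_nonneg (by omega : (0:ℤ) ≤ -k)]; ring
      have h2 : z ^ ((N:ℤ) * k) = z⁻¹ ^ (N * (-k).toNat) := by
        rw [← inv_inv z, inv_zpow, inv_inv, ← zpow_neg, ← h1, zpow_natCast, inv_pow]
      rw [h2, pow_mul]
      exact M.pow_mem hzN' _
  -- M is closed under inverses
  have hinvM : ∀ g ∈ M, g⁻¹ ∈ M := by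
    intro g hg
    obtain ⟨m', hm', k, hk⟩ := (hmem _).mp (H.inv_mem (hMH g hg))
    have hnegk : z ^ (-k) ∈ M := by
      have he : g * m' = z ^ (-k) := by
        have : m' = g⁻¹ * z ^ (-k) := by
          rw [zpow_neg, ← hk]; group
        rw [this]; group
      exact he ▸ M.mul_mem hg hm'
    have hposk : z ^ k ∈ M := by
      have hrepr : z ^ k = (z ^ (-k)) ^ (N - 1) * z ^ ((N:ℤ) * k) := by
        rw [← zpow_natCast (z ^ (-k)) (N-1), ← zpow_mul, ← zpow_add]
        congr 1
        have hcast : ((N - 1 : ℕ) : ℤ) = (N:ℤ) - 1 := by omega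
        rw [hcast]; ring
      rw [hrepr]
      exact M.mul_mem (M.pow_mem hnegk _) (hzNk k)
    rw [← hk]
    exact M.mul_mem hm' hposk
  -- build the subgroup
  refine ⟨{ M with inv_mem' := fun {g} hg => hinvM g hg }, rfl, ?_⟩
  set K : Subgroup G := { M with inv_mem' := fun {g} hg => hinvM g hg } with hK_def
  have hKH : K ≤ H := fun g hg => hMH g hg
  have hsurj : Function.Surjective
      (fun r : Fin N => (QuotientGroup.mk ((⟨z, hzH⟩ : H) ^ (r:ℕ)) : H ⧸ K.subgroupOf H)) := by
    intro q
    obtain ⟨hh, rfl⟩ := QuotientGroup.mk_surjective q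
    obtain ⟨m, hm, k, hk⟩ := (hmem _).mp hh.2
    have h0 : (0:ℤ) < (N:ℤ) := by exact_mod_cast hNpos
    have hr1 : 0 ≤ k % (N:ℤ) := Int.emod_nonneg k (by omega)
    have hr2 : k % (N:ℤ) < (N:ℤ) := Int.emod_lt_of_pos k h0
    refine ⟨⟨(k % (N:ℤ)).toNat, by omega⟩, ?_⟩
    simp only
    rw [QuotientGroup.eq, Subgroup.mem_subgroupOf]
    have hcoe : ((((⟨z, hzH⟩ : H) ^ ((k % (N:ℤ)).toNat))⁻¹ * hh : H) : G)
        = (z ^ ((k % (N:ℤ)).toNat))⁻¹ * (hh : G) := by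
      push_cast; ring_nf
    show ((((⟨z, hzH⟩ : H) ^ ((k % (N:ℤ)).toNat))⁻¹ * hh : H) : G) ∈ K
    rw [hcoe]
    have heq : (z ^ ((k % (N:ℤ)).toNat))⁻¹ * (hh : G) = m * z ^ ((N:ℤ) * (k / N)) := by
      rw [← hk, ← zpow_natCast z ((k % (N:ℤ)).toNat), Int.toNat_of_nonneg hr1,
        ← zpow_neg, ← mul_assoc, hzc m (-(k % (N:ℤ))), mul_assoc, ← zpow_add,
        show -(k % (N:ℤ)) + k = (N:ℤ) * (k / N) from by linarith [Int.mul_ediv_add_emod k (N:ℤ)]]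
    rw [heq]
    exact M.mul_mem hm (hzNk _)
  have hfinq : Finite (H ⧸ K.subgroupOf H) := Finite.of_surjective _ hsurj
  have hrel : K.relIndex H ≠ 0 := Subgroup.index_ne_zero_of_finite
  constructor
  have h6 := Subgroup.relIndex_mul_index hKH
  rw [← h6]
  exact Nat.mul_ne_zero hrel hHfin.index_ne_zero
end

section
/- Let G be a finitely generated nilpotent group and M a submonoid of G such that MG' = G, where G' = [G,G]. Then M = G. -/
/-!
Induct on the nilpotency class. If `Z` is the last nontrivial term of the lower central series,
then `M` maps onto `G ⧸ Z` by induction, so `M Z = G`. The group `Z` is central and generated by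
finitely many commutators `⁅g, h⁆`. Writing `g = a z`, `h = b w` with `a, b ∈ M` and `z, w ∈ Z`,
and choosing `p, q ∈ M` with `a p, b q ∈ Z`, the commutator is `t = ⁅a, b⁆` and
`p^k q^k a^k b^k = t^(k²) u^k` with `u = a p b q ∈ M ∩ Z`, and likewise for `t⁻¹`. Hence in the
abelian group `Z`, `t^(±k) u` has a positive power in `M` for every `k`. Multiplying over the
finitely many generators gives one `u` that works for all of them, which forces every element of
`Z` to have a positive power in `M`. Then `M ∩ Z` is a subgroup containing all generators, so
`Z ⊆ M` and `M = M Z = G`.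
-/

open scoped commutatorElement Pointwise
open Subgroup

section Commutator

variable {G : Type*} [Group G]

theorem commutatorElement_zpow_right_of_mem_center {a b : G} (h : ⁅a, b⁆ ∈ center G) (j : ℤ) :
    ⁅a, b ^ j⁆ = ⁅a, b⁆ ^ j := by
  have hc : Commute ⁅a, b⁆ b := (mem_center_iff.mp h b).symm
  have hconj : a * b * a⁻¹ = ⁅a, b⁆ * b := by rw [commutatorElement_def]; group
  rw [commutatorElement_def a (b ^ j), ← conj_zpow, hconj, hc.mul_zpow, mul_inv_cancel_right]

theorem commutatorElement_zpow_zpow_of_mem_center {a b : G} (h : ⁅a, b⁆ ∈ center G) (i j : ℤ) :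
    ⁅a ^ i, b ^ j⁆ = ⁅a, b⁆ ^ (i * j) := by
  have hba : ⁅b, a⁆ ∈ center G := by rw [← commutatorElement_inv]; exact inv_mem h
  have hleft : ⁅a ^ i, b⁆ = ⁅a, b⁆ ^ i := by
    rw [← commutatorElement_inv, commutatorElement_zpow_right_of_mem_center hba, ← inv_zpow,
      commutatorElement_inv]
  have hleft_mem : ⁅a ^ i, b⁆ ∈ center G := hleft ▸ zpow_mem h i
  rw [commutatorElement_zpow_right_of_mem_center hleft_mem, hleft, zpow_mul]

theorem commutatorElement_mul_mul_of_mem_center (a b : G) {z w : G} (hz : z ∈ center G)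
    (hw : w ∈ center G) : ⁅a * z, b * w⁆ = ⁅a, b⁆ := by
  rw [commutatorElement_mul_left_eq_conj_mul,
    commutatorElement_eq_one_iff_mul_comm.mpr (mem_center_iff.mp hz _).symm,
    commutatorElement_mul_right_eq_mul_conj,
    commutatorElement_eq_one_iff_mul_comm.mpr (mem_center_iff.mp hw _)]
  group

theorem mul_right_comm_of_mem_center (x y : G) {z : G} (hz : z ∈ center G) :
    x * z * y = x * y * z := by
  rw [mul_assoc, ← mem_center_iff.mp hz y, mul_assoc]

theorem pow_mul_pow_mul_pow_mul_pow_of_mem_center {a b p q : G} (hab : ⁅a, b⁆ ∈ center G)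
    (hp : a * p ∈ center G) (hq : b * q ∈ center G) (k : ℕ) :
    p ^ k * q ^ k * a ^ k * b ^ k = ⁅a, b⁆ ^ (k * k) * (a * p * (b * q)) ^ k := by
  have hcomm : a⁻¹ ^ k * b⁻¹ ^ k * a ^ k * b ^ k = ⁅a, b⁆ ^ (k * k) := by
    have := commutatorElement_zpow_zpow_of_mem_center hab (-k) (-k)
    rw [neg_mul_neg, ← Nat.cast_mul, zpow_natCast, commutatorElement_def] at this
    simpa [zpow_neg] using this
  obtain ⟨c, hc, rfl⟩ : ∃ c ∈ center G, p = a⁻¹ * c := ⟨a * p, hp, by group⟩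
  obtain ⟨d, hd, rfl⟩ : ∃ d ∈ center G, q = b⁻¹ * d := ⟨b * q, hq, by group⟩
  rw [mul_inv_cancel_left, mul_inv_cancel_left, ← hcomm,
    Commute.mul_pow (mem_center_iff.mp hc _), Commute.mul_pow (mem_center_iff.mp hd _),
    Commute.mul_pow (mem_center_iff.mp hd _)]
  simp only [← mul_assoc]
  simp only [mul_right_comm_of_mem_center _ _ (pow_mem hc k)]
  simp only [mul_right_comm_of_mem_center _ _ (pow_mem hd k)]

end Commutator

namespace Submonoid

section CommMonoid

variable {A : Type*} [CommMonoid A]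

def rootClosure (N : Submonoid A) : Submonoid A where
  carrier := {a | ∃ q, 0 < q ∧ a ^ q ∈ N}
  mul_mem' := by
    rintro a b ⟨q, hq, ha⟩ ⟨r, hr, hb⟩
    refine ⟨q * r, Nat.mul_pos hq hr, ?_⟩
    rw [mul_pow, pow_mul, pow_mul']
    exact N.mul_mem (N.pow_mem ha r) (N.pow_mem hb q)
  one_mem' := ⟨1, one_pos, by simp [N.one_mem]⟩

variable {N : Submonoid A}

theorem le_rootClosure : N ≤ N.rootClosure := fun a ha => ⟨1, one_pos, by simpa using ha⟩

theorem mem_rootClosure_of_pow_mem {a : A} {q : ℕ} (hq : 0 < q) (ha : a ^ q ∈ N.rootClosure) :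
    a ∈ N.rootClosure := by
  obtain ⟨r, hr, har⟩ := ha
  exact ⟨q * r, Nat.mul_pos hq hr, by rwa [pow_mul]⟩

theorem pow_mul_mem_rootClosure {s u : A} (hu : u ∈ N) (hs : ∀ k : ℕ, s ^ (k * k) * u ^ k ∈ N)
    (k : ℕ) : s ^ k * u ∈ N.rootClosure := by
  rcases Nat.eq_zero_or_pos k with rfl | hk
  · simpa using le_rootClosure hu
  · exact ⟨k, hk, by rw [mul_pow, ← pow_mul]; exact hs k⟩

end CommMonoid

variable {A : Type*} [CommGroup A] {N : Submonoid A}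

theorem eq_top_of_zpow_mul_mem (hN : ∀ a (q : ℕ), 0 < q → a ^ q ∈ N → a ∈ N) {T : Set A}
    (hT : Subgroup.closure T = ⊤) {u : A} (hu : u ∈ N) (hTu : ∀ t ∈ T, ∀ c : ℤ, t ^ c * u ∈ N) :
    N = ⊤ := by
  let X : Subgroup A :=
    { carrier := {x | ∀ c : ℤ, x ^ c * u ∈ N}
      one_mem' := by simpa using hu
      mul_mem' := by
        intro x y hx hy c
        refine hN _ 2 two_pos ?_
        have : ((x * y) ^ c * u) ^ 2 = (x ^ (2 * c) * u) * (y ^ (2 * c) * u) := by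
          simp only [sq, mul_zpow, two_mul, zpow_add]; ac_rfl
        rw [this]
        exact N.mul_mem (hx _) (hy _)
      inv_mem' := by
        intro x hx c
        simpa using hx (-c) }
  have hX : X = ⊤ := by
    rw [eq_top_iff, ← hT, Subgroup.closure_le]
    exact hTu
  refine (eq_top_iff' N).mpr fun a => ?_
  have : a * u⁻¹ ∈ X := hX ▸ Subgroup.mem_top _
  simpa using this 1

theorem eq_top_of_pow_mul_self_mul_pow_mem {T : Set A} (hTfin : T.Finite)
    (hT : Subgroup.closure T = ⊤)
    (hTN : ∀ t ∈ T, ∃ u ∈ N, ∀ k : ℕ, t ^ (k * k) * u ^ k ∈ N ∧ t⁻¹ ^ (k * k) * u ^ k ∈ N) :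
    N = ⊤ := by
  classical
  choose! u huN hu using hTN
  -- A single `u` has to serve all generators at once: this is where the finiteness of `T` is used.
  have hroot : N.rootClosure = ⊤ := by
    refine eq_top_of_zpow_mul_mem (fun a q hq => mem_rootClosure_of_pow_mem hq) hT
      (le_rootClosure (_root_.prod_mem fun t ht => huN t (hTfin.mem_toFinset.mp ht)))
      fun t ht c => ?_
    have hmem : t ^ c * u t ∈ N.rootClosure := by
      obtain ⟨k, rfl | rfl⟩ := Int.eq_nat_or_neg c
      · simpa using pow_mul_mem_rootClosure (huN t ht) (fun k => (hu t ht k).1) k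
      · simpa using pow_mul_mem_rootClosure (huN t ht) (fun k => (hu t ht k).2) k
    rw [← Finset.mul_prod_erase _ _ (hTfin.mem_toFinset.mpr ht), ← mul_assoc]
    exact mul_mem hmem (le_rootClosure (_root_.prod_mem fun s hs =>
      huN s (hTfin.mem_toFinset.mp (Finset.mem_of_mem_erase hs))))
  have hinv : ∀ a ∈ N, a⁻¹ ∈ N := by
    intro a ha
    obtain ⟨q, hq, haq⟩ : a⁻¹ ∈ N.rootClosure := hroot ▸ mem_top _
    obtain ⟨r, rfl⟩ := Nat.exists_eq_succ_of_ne_zero hq.ne'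
    have : a⁻¹ = a ^ r * a⁻¹ ^ (r + 1) := by group
    exact this ▸ N.mul_mem (N.pow_mem ha _) haq
  refine (eq_top_iff' N).mpr fun a => ?_
  have ha : a ∈ Subgroup.closure T := hT ▸ Subgroup.mem_top a
  induction ha using Subgroup.closure_induction with
  | mem t ht =>
    have htu : t * u t ∈ N := by simpa using (hu t ht 1).1
    simpa using N.mul_mem htu (hinv _ (huN t ht))
  | one => exact N.one_mem
  | mul x y _ _ hx hy => exact N.mul_mem hx hy
  | inv x _ hx => exact hinv x hx

end Submonoid

section LowerCentralSeries

variable {G : Type*} [Group G]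

theorem commutatorElement_mem_of_mem_closure_right {N : Subgroup G} [hN : N.Normal] {a b : G}
    {Y : Set G} (ha : ∀ y ∈ Y, ⁅a, y⁆ ∈ N) (hb : b ∈ closure Y) : ⁅a, b⁆ ∈ N := by
  induction hb using closure_induction with
  | mem y hy => exact ha y hy
  | one => simp [N.one_mem]
  | mul x y _ _ hx hy =>
    rw [commutatorElement_mul_right_eq_mul_conj, mul_assoc _ x, mul_assoc]
    exact N.mul_mem hx (hN.conj_mem _ hy x)
  | inv x _ hx =>
    rw [commutatorElement_inv_right, ← commutatorElement_inv]
    simpa using hN.conj_mem _ (N.inv_mem hx) x⁻¹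

theorem Subgroup.commutator_closure_le {N : Subgroup G} [N.Normal] {X Y : Set G}
    (h : ∀ x ∈ X, ∀ y ∈ Y, ⁅x, y⁆ ∈ N) : ⁅closure X, closure Y⁆ ≤ N := by
  refine commutator_le.mpr fun a ha b hb => commutatorElement_mem_of_mem_closure_right
    (fun y hy => ?_) hb
  rw [← commutatorElement_inv]
  exact N.inv_mem (commutatorElement_mem_of_mem_closure_right
    (fun x hx => by rw [← commutatorElement_inv]; exact N.inv_mem (h x hx y hy)) ha)

theorem Subgroup.normal_of_le_center {H : Subgroup G} (h : H ≤ center G) : H.Normal :=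
  ⟨fun z hz g => by rwa [mem_center_iff.mp (h hz) g, mul_inv_cancel_right]⟩

theorem lowerCentralSeries_le_center {n : ℕ}
    (hbot : (⊤ : Subgroup G).lowerCentralSeries (n + 1) = ⊥) :
    (⊤ : Subgroup G).lowerCentralSeries n ≤ center G :=
  commutator_top_right_eq_bot_iff_le_center.mp hbot

theorem lowerCentralSeries_succ_eq_closure_image2 {n : ℕ} {F S : Set G} (hS : closure S = ⊤)
    (hF : (⊤ : Subgroup G).lowerCentralSeries n
      = closure F ⊔ (⊤ : Subgroup G).lowerCentralSeries (n + 1))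
    (hbot : (⊤ : Subgroup G).lowerCentralSeries (n + 2) = ⊥) :
    (⊤ : Subgroup G).lowerCentralSeries (n + 1) = closure (Set.image2 (⁅·, ·⁆) F S) := by
  have hcen := lowerCentralSeries_le_center hbot
  have hK : closure (Set.image2 (⁅·, ·⁆) F S) ≤ (⊤ : Subgroup G).lowerCentralSeries (n + 1) := by
    rw [closure_le]
    rintro _ ⟨f, hf, s, -, rfl⟩
    have hfn : f ∈ (⊤ : Subgroup G).lowerCentralSeries n := hF ▸ mem_sup_left (subset_closure hf)
    exact commutator_mem_commutator hfn (mem_top s)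
  have := normal_of_le_center (hK.trans hcen)
  refine le_antisymm ?_ hK
  have hsplit : (⊤ : Subgroup G).lowerCentralSeries (n + 1)
      = ⁅closure (F ∪ (⊤ : Subgroup G).lowerCentralSeries (n + 1)), closure S⁆ := by
    rw [hS, Subgroup.closure_union, closure_eq, ← hF, Subgroup.lowerCentralSeries_succ]
  refine hsplit.trans_le (commutator_closure_le fun x hx s _ => ?_)
  rcases hx with hx | hx
  · exact subset_closure ⟨x, hx, s, ‹_›, rfl⟩
  · rw [commutatorElement_eq_one_iff_mul_comm.mpr (mem_center_iff.mp (hcen hx) s).symm]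
    exact one_mem _

theorem Subgroup.exists_finite_eq_closure_sup_ker {Q : Type*} [Group Q] (f : G →* Q)
    {H : Subgroup G} (hH : f.ker ≤ H) {X : Set Q} (hX : X.Finite) (h : H.map f = closure X) :
    ∃ F : Set G, F.Finite ∧ H = closure F ⊔ f.ker := by
  have hXH : X ⊆ f '' H := by
    rw [← coe_map, h]
    exact subset_closure
  obtain ⟨F, -, hFfin, rfl⟩ := Set.exists_subset_image_finite_and.mp ⟨X, hXH, hX, rfl⟩
  refine ⟨F, hFfin, map_injective_of_ker_le f hH le_sup_right ?_⟩
  rw [h, map_sup, MonoidHom.map_closure, (Subgroup.map_eq_bot_iff _).mpr le_rfl, sup_bot_eq]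

theorem map_top_lowerCentralSeries_of_surjective {H : Type*} [Group H] {f : G →* H}
    (hf : Function.Surjective f) (n : ℕ) :
    ((⊤ : Subgroup G).lowerCentralSeries n).map f = (⊤ : Subgroup H).lowerCentralSeries n := by
  rw [map_lowerCentralSeries, map_top_of_surjective f hf]

end LowerCentralSeries

theorem exists_finite_lowerCentralSeries_eq_closure_sup (n : ℕ) (G : Type*) [Group G]
    [Group.FG G] : ∃ F : Set G, F.Finite ∧
      (⊤ : Subgroup G).lowerCentralSeries n
        = closure F ⊔ (⊤ : Subgroup G).lowerCentralSeries (n + 1) := by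
  induction n generalizing G with
  | zero =>
    obtain ⟨S, hS, hSfin⟩ := Group.fg_iff.mp ‹_›
    exact ⟨S, hSfin, by simp [hS]⟩
  | succ n ih =>
    let K := (⊤ : Subgroup G).lowerCentralSeries (n + 2)
    let π := QuotientGroup.mk' K
    have hπ := QuotientGroup.mk'_surjective K
    have hker : π.ker = K := QuotientGroup.ker_mk' K
    obtain ⟨F, hFfin, hF⟩ := ih (G ⧸ K)
    obtain ⟨S, hS, hSfin⟩ := Group.fg_iff.mp (inferInstance : Group.FG (G ⧸ K))
    have hbot : (⊤ : Subgroup (G ⧸ K)).lowerCentralSeries (n + 2) = ⊥ := by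
      rw [← map_top_lowerCentralSeries_of_surjective hπ, Subgroup.map_eq_bot_iff, hker]
    obtain ⟨F', hF'fin, hF'⟩ := exists_finite_eq_closure_sup_ker π
      (hker.trans_le (Subgroup.lowerCentralSeries_antitone _ (Nat.le_succ _)))
      (hFfin.image2 _ hSfin)
      ((map_top_lowerCentralSeries_of_surjective hπ _).trans
        (lowerCentralSeries_succ_eq_closure_image2 hS hF hbot))
    exact ⟨F', hF'fin, by rwa [hker] at hF'⟩

theorem exists_finite_subset_commutatorSet_closure_eq {G : Type*} [Group G] [Group.FG G] {n : ℕ}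
    (hbot : (⊤ : Subgroup G).lowerCentralSeries (n + 2) = ⊥) :
    ∃ T : Set G, T.Finite ∧ T ⊆ commutatorSet G ∧
      closure T = (⊤ : Subgroup G).lowerCentralSeries (n + 1) := by
  obtain ⟨F, hFfin, hF⟩ := exists_finite_lowerCentralSeries_eq_closure_sup n G
  obtain ⟨S, hS, hSfin⟩ := Group.fg_iff.mp ‹_›
  refine ⟨_, hFfin.image2 _ hSfin, ?_, (lowerCentralSeries_succ_eq_closure_image2 hS hF hbot).symm⟩
  rintro _ ⟨f, -, s, -, rfl⟩
  exact commutator_mem_commutatorSet f s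

section CentralStep

variable {G : Type*} [Group G] {M : Submonoid G}

theorem exists_mem_mul_eq_of_mul_eq_univ {Z : Subgroup G}
    (hMZ : (M : Set G) * (Z : Set G) = Set.univ) (g : G) : ∃ m ∈ M, ∃ z ∈ Z, m * z = g :=
  Set.mem_mul.mp (hMZ ▸ Set.mem_univ g)

theorem exists_pow_mul_pow_mem_of_mem_commutatorSet {Z : Subgroup G} (hZ : Z ≤ center G)
    (hMZ : (M : Set G) * (Z : Set G) = Set.univ) {t : G} (ht : t ∈ commutatorSet G)
    (htZ : t ∈ Z) :
    ∃ u ∈ M, u ∈ Z ∧ ∀ k : ℕ, t ^ (k * k) * u ^ k ∈ M ∧ t⁻¹ ^ (k * k) * u ^ k ∈ M := by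
  have hcompl : ∀ m : G, ∃ p ∈ M, m * p ∈ Z := fun m => by
    obtain ⟨p, hp, z, hz, hpz⟩ := exists_mem_mul_eq_of_mul_eq_univ hMZ m⁻¹
    have : m * p = z⁻¹ := eq_inv_of_mul_eq_one_left (by rw [mul_assoc, hpz, mul_inv_cancel])
    exact ⟨p, hp, this ▸ Z.inv_mem hz⟩
  obtain ⟨g, h, rfl⟩ := ht
  obtain ⟨a, ha, z, hz, rfl⟩ := exists_mem_mul_eq_of_mul_eq_univ hMZ g
  obtain ⟨b, hb, w, hw, rfl⟩ := exists_mem_mul_eq_of_mul_eq_univ hMZ h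
  rw [commutatorElement_mul_mul_of_mem_center a b (hZ hz) (hZ hw)] at htZ ⊢
  obtain ⟨p, hp, hap⟩ := hcompl a
  obtain ⟨q, hq, hbq⟩ := hcompl b
  have hab := hZ htZ
  refine ⟨a * p * (b * q), M.mul_mem (M.mul_mem ha hp) (M.mul_mem hb hq), Z.mul_mem hap hbq,
    fun k => ⟨?_, ?_⟩⟩
  · rw [← pow_mul_pow_mul_pow_mul_pow_of_mem_center hab (hZ hap) (hZ hbq)]
    exact M.mul_mem (M.mul_mem (M.mul_mem (M.pow_mem hp k) (M.pow_mem hq k)) (M.pow_mem ha k))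
      (M.pow_mem hb k)
  · have hba : ⁅b, a⁆ ∈ center G := by rw [← commutatorElement_inv]; exact inv_mem hab
    rw [commutatorElement_inv, ← mem_center_iff.mp (hZ hap) (b * q),
      ← pow_mul_pow_mul_pow_mul_pow_of_mem_center hba (hZ hbq) (hZ hap)]
    exact M.mul_mem (M.mul_mem (M.mul_mem (M.pow_mem hq k) (M.pow_mem hp k)) (M.pow_mem hb k))
      (M.pow_mem ha k)

theorem Submonoid.eq_top_of_mul_closure_eq_univ {T : Set G} (hTfin : T.Finite)
    (hTcomm : T ⊆ commutatorSet G) (hTcen : Subgroup.closure T ≤ Subgroup.center G)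
    (hMT : (M : Set G) * (Subgroup.closure T : Set G) = Set.univ) : M = ⊤ := by
  let _ : CommGroup (Subgroup.closure T) :=
    { (inferInstance : Group (Subgroup.closure T)) with
      mul_comm := fun a b => Subtype.ext (mem_center_iff.mp (hTcen b.2) a) }
  have hN : M.comap (Subgroup.closure T).subtype = ⊤ := by
    refine Submonoid.eq_top_of_pow_mul_self_mul_pow_mem
      (hTfin.preimage (Set.injOn_of_injective (Subgroup.closure T).subtype_injective))
      (closure_preimage_eq_top T) fun t ht => ?_
    obtain ⟨u, huM, huZ, hu⟩ :=
      exists_pow_mul_pow_mem_of_mem_commutatorSet hTcen hMT (hTcomm ht) t.2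
    exact ⟨⟨u, huZ⟩, huM, hu⟩
  refine (eq_top_iff' M).mpr fun g => ?_
  obtain ⟨m, hm, z, hz, rfl⟩ := exists_mem_mul_eq_of_mul_eq_univ hMT g
  exact M.mul_mem hm
    (show (⟨z, hz⟩ : Subgroup.closure T) ∈ M.comap (Subgroup.closure T).subtype from hN ▸ trivial)

end CentralStep

section Quotient

variable {G : Type*} [Group G] {M : Submonoid G}

theorem Submonoid.mul_commutator_eq_univ_map {H : Type*} [Group H] {f : G →* H}
    (hf : Function.Surjective f) (h : (M : Set G) * (commutator G : Set G) = Set.univ) :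
    (M.map f : Set H) * (commutator H : Set H) = Set.univ := by
  have hcomm : (commutator G).map f = commutator H := by
    rw [map_commutator_eq, MonoidHom.range_eq_top.mpr hf, commutator_def]
  rw [Submonoid.coe_map, ← hcomm, Subgroup.coe_map, ← Set.image_mul, h, Set.image_univ,
    Set.range_eq_univ.mpr hf]

theorem Submonoid.mul_eq_univ_of_map_mk'_eq_top {Z : Subgroup G} [Z.Normal]
    (h : M.map (QuotientGroup.mk' Z) = ⊤) : (M : Set G) * (Z : Set G) = Set.univ := by
  refine Set.eq_univ_of_forall fun g => ?_
  obtain ⟨m, hm, hmg⟩ : QuotientGroup.mk' Z g ∈ M.map (QuotientGroup.mk' Z) :=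
    h ▸ Submonoid.mem_top _
  exact ⟨m, hm, m⁻¹ * g, QuotientGroup.eq.mp hmg, mul_inv_cancel_left m g⟩

end Quotient

theorem Submonoid.eq_top_of_mul_commutator_eq_univ {G : Type*} [Group G] [Group.FG G] {n : ℕ}
    (hn : (⊤ : Subgroup G).lowerCentralSeries (n + 1) = ⊥) (M : Submonoid G)
    (h : (M : Set G) * (commutator G : Set G) = Set.univ) : M = ⊤ := by
  induction n generalizing G with
  | zero =>
    rw [zero_add, top_lowerCentralSeries_one] at hn
    refine (eq_top_iff' M).mpr fun g => ?_
    have hg : g ∈ (M : Set G) * (commutator G : Set G) := h ▸ Set.mem_univ g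
    simpa [hn] using hg
  | succ n ih =>
    let Z := (⊤ : Subgroup G).lowerCentralSeries (n + 1)
    obtain ⟨T, hTfin, hTcomm, hT⟩ := exists_finite_subset_commutatorSet_closure_eq hn
    have hπ := QuotientGroup.mk'_surjective Z
    have hQ : (⊤ : Subgroup (G ⧸ Z)).lowerCentralSeries (n + 1) = ⊥ := by
      rw [← map_top_lowerCentralSeries_of_surjective hπ, Subgroup.map_eq_bot_iff,
        QuotientGroup.ker_mk']
    have hMZ : (M : Set G) * (Subgroup.closure T : Set G) = Set.univ := by
      rw [hT]
      exact mul_eq_univ_of_map_mk'_eq_top (ih hQ _ (mul_commutator_eq_univ_map hπ h))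
    exact eq_top_of_mul_closure_eq_univ hTfin hTcomm (hT ▸ lowerCentralSeries_le_center hn) hMZ

theorem stmt_12 {G : Type*} [Group G] [Group.FG G] [Group.IsNilpotent G]
    (M : Submonoid G)
    (h : (M : Set G) * ((commutator G : Subgroup G) : Set G) = Set.univ) :
    M = ⊤ := by
  obtain ⟨n, hn⟩ := Subgroup.nilpotent_iff_lowerCentralSeries.mp ‹Group.IsNilpotent G›
  exact M.eq_top_of_mul_commutator_eq_univ
    (le_bot_iff.mp (hn ▸ Subgroup.lowerCentralSeries_antitone _ n.le_succ)) h
end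

section
/- Let A ∈ ℝ^{m×n} be a matrix such that the set {v ∈ ℝⁿ : Av = 0, Σᵢ vᵢ = 1, v ≥ 0} is empty. Then there exists u ∈ ℤᵐ such that every coordinate of Aᵀu is strictly positive. -/
/-!
Since `A` maps the standard simplex `Δ` to a compact convex set missing `0`, Hahn–Banach gives a
functional `f` with `f (A eⱼ) < 0` for every column, and `w = -(f eᵢ)ᵢ` satisfies `Aᵀ w > 0`.
The set `{x | Aᵀ x > 0}` is an open cone, so it contains the vector `⌊N w⌋ / N` for `N` large,
hence also the integer vector `⌊N w⌋`.
-/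

open Matrix

theorem abs_floor_mul_div_sub_lt {N : ℝ} (hN : 0 < N) (x : ℝ) : |⌊N * x⌋ / N - x| < N⁻¹ := by
  have hfract : (⌊N * x⌋ : ℝ) / N - x = -(Int.fract (N * x) / N) := by
    rw [Int.fract]; field_simp; ring
  rw [hfract, abs_neg, abs_of_nonneg (by have := Int.fract_nonneg (N * x); positivity),
    div_lt_iff₀ hN, inv_mul_cancel₀ hN.ne']
  exact Int.fract_lt_one _

theorem IsOpen.exists_intCast_mem_of_smul_mem {ι : Type*} [Fintype ι] {U : Set (ι → ℝ)}
    (hU : IsOpen U) (hsmul : ∀ c : ℝ, 0 < c → ∀ x ∈ U, c • x ∈ U) (hne : U.Nonempty) :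
    ∃ u : ι → ℤ, (fun i => (u i : ℝ)) ∈ U := by
  obtain ⟨w, hw⟩ := hne
  obtain ⟨δ, hδ, hball⟩ := Metric.isOpen_iff.1 hU w hw
  obtain ⟨N, hN⟩ := exists_nat_gt δ⁻¹
  have hNpos : (0 : ℝ) < N := (inv_pos.2 hδ).trans hN
  have hNδ : (N : ℝ)⁻¹ < δ := inv_lt_of_inv_lt₀ hδ hN
  refine ⟨fun i => ⌊N * w i⌋, ?_⟩
  have hnear : (fun i => (⌊N * w i⌋ : ℝ) / N) ∈ U := by
    refine hball ((dist_pi_lt_iff hδ).2 fun i => ?_)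
    rw [Real.dist_eq]
    exact (abs_floor_mul_div_sub_lt hNpos (w i)).trans hNδ
  convert hsmul N hNpos _ hnear using 1
  ext i
  simp [mul_div_cancel₀ _ hNpos.ne']

theorem exists_forall_pos_transpose_mulVec_of_stdSimplex {ι κ : Type*} [Fintype ι] [Fintype κ]
    (A : Matrix κ ι ℝ) (h : ∀ v ∈ stdSimplex ℝ ι, A *ᵥ v ≠ 0) :
    ∃ w : κ → ℝ, ∀ j, 0 < (Aᵀ *ᵥ w) j := by
  classical
  have hdisj : Disjoint (A.mulVecLin '' stdSimplex ℝ ι) {0} := by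
    rw [Set.disjoint_singleton_right]
    rintro ⟨v, hv, hAv⟩
    exact h v hv hAv
  obtain ⟨f, a, b, hfa, hab, hb0⟩ := geometric_hahn_banach_compact_closed
    ((convex_stdSimplex ℝ ι).linear_image _)
    ((isCompact_stdSimplex ℝ ι).image A.mulVecLin.continuous_of_finiteDimensional)
    (convex_singleton 0) isClosed_singleton hdisj
  have hf : ∀ x, f x = (fun i => f (Pi.single i 1)) ⬝ᵥ x := by
    intro x
    conv_lhs => rw [← Finset.univ_sum_single x]
    simp only [map_sum, dotProduct, mul_comm]
    refine Finset.sum_congr rfl fun i _ => ?_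
    rw [← smul_eq_mul, ← map_smul, ← Pi.single_smul, smul_eq_mul, mul_one]
  refine ⟨-fun i => f (Pi.single i 1), fun j => ?_⟩
  have hcol := hfa _ ⟨Pi.single j 1, single_mem_stdSimplex ℝ j, rfl⟩
  have hf0 := hb0 0 rfl
  rw [hf, mulVecLin_apply, dotProduct_mulVec, dotProduct_single, mul_one] at hcol
  simp only [mulVec_transpose, neg_vecMul, Pi.neg_apply, map_zero] at hcol hf0 ⊢
  linarith

theorem stmt_13 {m n : ℕ} (A : Matrix (Fin m) (Fin n) ℝ)
    (h : ¬ ∃ v : Fin n → ℝ, A.mulVec v = 0 ∧ (∑ i, v i) = 1 ∧ ∀ i, 0 ≤ v i) :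
    ∃ u : Fin m → ℤ, ∀ j, 0 < A.transpose.mulVec (fun i => (u i : ℝ)) j := by
  obtain ⟨w, hw⟩ := exists_forall_pos_transpose_mulVec_of_stdSimplex A
    fun v ⟨hv0, hv1⟩ hAv => h ⟨v, hAv, hv1, hv0⟩
  refine IsOpen.exists_intCast_mem_of_smul_mem (U := {x | ∀ j, 0 < (Aᵀ *ᵥ x) j}) ?_ ?_ ⟨w, hw⟩
  · simp only [Set.ofPred_forall]
    exact isOpen_iInter_of_finite fun j => isOpen_lt continuous_const <|
      (continuous_apply j).comp (continuous_const.matrix_mulVec continuous_id)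
  · intro c hc x hx j
    rw [mulVec_smul, Pi.smul_apply, smul_eq_mul]
    exact mul_pos hc (hx j)
end

section
/- Let G be a group, H ≤ G a subgroup, and A ⊆ H a finite subset generating H as a group. Suppose that for every a ∈ A, a⁻¹ ∈ A*H', where A* is the submonoid generated by A and H' = [H,H]. Then A*H' = H. -/
open scoped Pointwise

theorem stmt_17 {G : Type*} [Group G] (H : Subgroup G) (A : Finset G)
    (hA : (A : Set G) ⊆ (H : Set G))
    (hgen : Subgroup.closure (A : Set G) = H)
    (hinv : ∀ a ∈ A, a⁻¹ ∈
      ((Submonoid.closure (A : Set G) : Submonoid G) : Set G) *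
        ((⁅H, H⁆ : Subgroup G) : Set G)) :
    ((Submonoid.closure (A : Set G) : Submonoid G) : Set G) *
        ((⁅H, H⁆ : Subgroup G) : Set G) = (H : Set G) := by
  set N : Subgroup G := ⁅H, H⁆ with hNdef
  set S : Set G := ((Submonoid.closure (A : Set G) : Submonoid G) : Set G) *
      ((N : Subgroup G) : Set G) with hSdef
  have hAH : Submonoid.closure (A : Set G) ≤ H.toSubmonoid :=
    Submonoid.closure_le.mpr hA
  have hNH : N ≤ H := by
    rw [hNdef, Subgroup.commutator_le]
    intro g₁ h₁ g₂ h₂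
    exact H.mul_mem (H.mul_mem (H.mul_mem h₁ h₂) (H.inv_mem h₁)) (H.inv_mem h₂)
  have hconj : ∀ g ∈ H, ∀ n ∈ N, g * n * g⁻¹ ∈ N := by
    intro g hg n hn
    have hle : N.map (MulAut.conj g).toMonoidHom ≤ N := by
      rw [hNdef, Subgroup.map_commutator]
      apply Subgroup.commutator_mono <;>
      · intro x hx
        rcases Subgroup.mem_map.mp hx with ⟨y, hy, rfl⟩
        simpa using H.mul_mem (H.mul_mem hg hy) (H.inv_mem hg)
    apply hle
    exact Subgroup.mem_map.mpr ⟨n, hn, by simp [MulAut.conj_apply, mul_assoc]⟩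
  have hmem : ∀ w ∈ Submonoid.closure (A : Set G), ∀ n ∈ N, w * n ∈ S := by
    intro w hw n hn
    exact ⟨w, hw, n, hn, rfl⟩
  have hmul : ∀ x ∈ S, ∀ y ∈ S, x * y ∈ S := by
    rintro x ⟨w, hw, n, hn, rfl⟩ y ⟨w', hw', n', hn', rfl⟩
    have h1 : w'⁻¹ * n * w' ∈ N := by
      have := hconj w'⁻¹ (H.inv_mem (hAH hw')) n hn
      simpa using this
    have : (w * n) * (w' * n') = (w * w') * ((w'⁻¹ * n * w') * n') := by
      group
    rw [this]
    exact hmem _ (Submonoid.mul_mem _ hw hw') _ (N.mul_mem h1 hn')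
  have hinvw : ∀ w ∈ Submonoid.closure (A : Set G), w⁻¹ ∈ S := by
    intro w hw
    induction hw using Submonoid.closure_induction with
    | mem a ha => exact hinv a ha
    | one => simpa using hmem 1 (Submonoid.one_mem _) 1 N.one_mem
    | mul x y hx hy ihx ihy =>
        have := hmul _ ihy _ ihx
        simpa [mul_inv_rev] using this
  have hinvS : ∀ x ∈ S, x⁻¹ ∈ S := by
    rintro x ⟨w, hw, n, hn, rfl⟩
    have h1 : n⁻¹ ∈ S := by simpa using hmem 1 (Submonoid.one_mem _) n⁻¹ (N.inv_mem hn)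
    have := hmul _ h1 _ (hinvw w hw)
    simpa [mul_inv_rev] using this
  apply Set.Subset.antisymm
  · rintro x ⟨w, hw, n, hn, rfl⟩
    exact H.mul_mem (hAH hw) (hNH hn)
  · intro x hx
    rw [← hgen] at hx
    induction hx using Subgroup.closure_induction with
    | mem a ha => simpa using hmem a (Submonoid.subset_closure ha) 1 N.one_mem
    | one => simpa using hmem 1 (Submonoid.one_mem _) 1 N.one_mem
    | mul x y hx hy ihx ihy => exact hmul _ ihx _ ihy
    | inv x hx ihx => exact hinvS _ ihx
end

section
/- Let G be a finitely generated nilpotent group and A ⊆ G a finite set such that for every a ∈ A, a⁻¹ lies in A*·H', where H = ⟨A⟩, A* is the submonoid generated by A, and H' = [H,H]. Then A* = ⟨A⟩, i.e., the submonoid generated by A is a group. -/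
/-!
Let `H = ⟨A⟩` and induct on its nilpotency class, passing to the quotient by the last nontrivial
term `K` of the lower central series, which is central. By induction every `a ∈ A` has some
`m ∈ A*` with `a m ∈ K`; the product of these elements is a central `ζ ∈ K ∩ A*` with
`a⁻¹ ζ ∈ A*` for all `a ∈ A`. Since `K` is generated by central commutators, `ζ` is quadratically
distorted: `ζ⁻¹ ^ (n * n)` is a word of length `O(n)` in `A ∪ A⁻¹`. Trading each letter `a⁻¹` of
that word for `a⁻¹ ζ ∈ A*` shows `ζ⁻¹ ^ (n * n) * ζ ^ O(n) ∈ A*`, which for large `n` gives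
`ζ⁻¹ ∈ A*`, and then `a⁻¹ = (a⁻¹ ζ) ζ⁻¹ ∈ A*`.
-/

open scoped Pointwise commutatorElement
open Subgroup

section

variable {G : Type*} [Group G]

theorem commutatorElement_pow_left_of_mem_center {x y : G} (h : ⁅x, y⁆ ∈ center G) (n : ℕ) :
    ⁅x ^ n, y⁆ = ⁅x, y⁆ ^ n := by
  have hconj : y * x⁻¹ * y⁻¹ = x⁻¹ * ⁅x, y⁆ := by rw [commutatorElement_def]; group
  calc ⁅x ^ n, y⁆ = x ^ n * (y * x⁻¹ * y⁻¹) ^ n := by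
        rw [commutatorElement_def, conj_pow, inv_pow]; group
    _ = ⁅x, y⁆ ^ n := by
        rw [hconj, (show Commute x⁻¹ ⁅x, y⁆ from mem_center_iff.mp h x⁻¹).mul_pow, ← mul_assoc,
          inv_pow, mul_inv_cancel, one_mul]

theorem commutatorElement_pow_pow_of_mem_center {x y : G} (h : ⁅x, y⁆ ∈ center G) (n : ℕ) :
    ⁅x ^ n, y ^ n⁆ = ⁅x, y⁆ ^ (n * n) := by
  have hleft := commutatorElement_pow_left_of_mem_center h n
  have hcen : ⁅y, x ^ n⁆ ∈ center G := by
    rw [← commutatorElement_inv, hleft]; exact inv_mem (pow_mem h n)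
  rw [← commutatorElement_inv, commutatorElement_pow_left_of_mem_center hcen,
    ← commutatorElement_inv, hleft, inv_pow, inv_inv, pow_mul]

theorem exists_mem_union_inv_pow_of_mem_closure {A : Set G} {g : G} (hg : g ∈ closure A) :
    ∃ n, g ∈ (A ∪ A⁻¹) ^ n := by
  rw [← mem_toSubmonoid, closure_toSubmonoid] at hg
  induction hg using Submonoid.closure_induction with
  | mem x hx => exact ⟨1, by rwa [pow_one]⟩
  | one => exact ⟨0, by rw [pow_zero]; rfl⟩
  | mul x y _ _ hx hy =>
    obtain ⟨p, hp⟩ := hx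
    obtain ⟨q, hq⟩ := hy
    exact ⟨p + q, by rw [pow_add]; exact Set.mul_mem_mul hp hq⟩

theorem inv_mem_union_inv_pow {A : Set G} {g : G} {n : ℕ} (hg : g ∈ (A ∪ A⁻¹) ^ n) :
    g⁻¹ ∈ (A ∪ A⁻¹) ^ n := by
  rwa [← Set.mem_inv, ← inv_pow, Set.union_inv, inv_inv, Set.union_comm]

theorem exists_pow_mul_self_mem_pow_of_mem_commutator {A : Set G} (hA : closure A = ⊤)
    {H₁ H₂ : Subgroup G} (hcen : ⁅H₁, H₂⁆ ≤ center G) {z : G} (hz : z ∈ ⁅H₁, H₂⁆) :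
    ∃ C, ∀ n, z ^ (n * n) ∈ (A ∪ A⁻¹) ^ (C * n) := by
  rw [Subgroup.commutator_def] at hcen hz
  induction hz using closure_induction with
  | mem z hz =>
    obtain ⟨x, hx, y, hy, rfl⟩ := hz
    obtain ⟨p, hp⟩ := exists_mem_union_inv_pow_of_mem_closure (hA ▸ mem_top x : x ∈ closure A)
    obtain ⟨q, hq⟩ := exists_mem_union_inv_pow_of_mem_closure (hA ▸ mem_top y : y ∈ closure A)
    refine ⟨2 * (p + q), fun n => ?_⟩
    rw [← commutatorElement_pow_pow_of_mem_center (hcen (subset_closure ⟨x, hx, y, hy, rfl⟩)),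
      commutatorElement_def, show 2 * (p + q) * n = p * n + q * n + p * n + q * n by ring,
      pow_add, pow_add, pow_add]
    have hxn : x ^ n ∈ (A ∪ A⁻¹) ^ (p * n) := by rw [pow_mul]; exact Set.pow_mem_pow hp
    have hyn : y ^ n ∈ (A ∪ A⁻¹) ^ (q * n) := by rw [pow_mul]; exact Set.pow_mem_pow hq
    exact Set.mul_mem_mul (Set.mul_mem_mul (Set.mul_mem_mul hxn hyn) (inv_mem_union_inv_pow hxn))
      (inv_mem_union_inv_pow hyn)
  | one => exact ⟨0, fun n => by simp⟩
  | mul z w hz hw ihz ihw =>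
    obtain ⟨C₁, h₁⟩ := ihz
    obtain ⟨C₂, h₂⟩ := ihw
    refine ⟨C₁ + C₂, fun n => ?_⟩
    have hzw : Commute z w := mem_center_iff.mp (hcen hw) z
    rw [hzw.mul_pow, add_mul, pow_add]
    exact Set.mul_mem_mul (h₁ n) (h₂ n)
  | inv z hz ihz =>
    obtain ⟨C, h⟩ := ihz
    exact ⟨C, fun n => by rw [inv_pow]; exact inv_mem_union_inv_pow (h n)⟩

theorem mul_pow_mem_of_mem_pow {M : Submonoid G} {S : Set G} {ζ : G} (hζ : ζ ∈ center G)
    (hS : ∀ s ∈ S, s * ζ ∈ M) {n : ℕ} {g : G} (hg : g ∈ S ^ n) : g * ζ ^ n ∈ M := by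
  induction n generalizing g with
  | zero => rw [pow_zero] at hg; rw [hg, pow_zero, mul_one]; exact M.one_mem
  | succ n ih =>
    obtain ⟨h, hh, s, hs, rfl⟩ := (pow_succ S n ▸ hg : g ∈ S ^ n * S)
    have hcomm : s * ζ ^ n = ζ ^ n * s := ((mem_center_iff.mp (pow_mem hζ n)) s)
    rw [pow_succ, show h * s * (ζ ^ n * ζ) = h * ζ ^ n * (s * ζ) by
      rw [mul_assoc h, ← mul_assoc s, hcomm]; group]
    exact M.mul_mem (ih hh) (hS s hs)

theorem inv_mem_of_mem_commutator {A : Set G} (hA : closure A = ⊤) {M : Submonoid G}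
    (hAM : A ⊆ M) {H₁ H₂ : Subgroup G} (hcen : ⁅H₁, H₂⁆ ≤ center G) {ζ : G}
    (hζ : ζ ∈ ⁅H₁, H₂⁆) (hζM : ζ ∈ M) (hAζ : ∀ a ∈ A, a⁻¹ * ζ ∈ M) : ζ⁻¹ ∈ M := by
  obtain ⟨C, hC⟩ := exists_pow_mul_self_mem_pow_of_mem_commutator hA hcen (inv_mem hζ)
  have hS : ∀ s ∈ A ∪ A⁻¹, s * ζ ∈ M := by
    rintro s (hs | hs)
    · exact M.mul_mem (hAM hs) hζM
    · simpa using hAζ s⁻¹ hs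
  -- a word of length `C (C + 1)` for `ζ⁻¹ ^ (C + 1) ^ 2` leaves a surplus of `C + 1` inverse powers
  have hsurplus : ζ⁻¹ ^ ((C + 1) * (C + 1)) * ζ ^ (C * (C + 1)) ∈ M :=
    mul_pow_mem_of_mem_pow (hcen hζ) hS (hC (C + 1))
  convert M.mul_mem hsurplus (M.pow_mem hζM C) using 1
  group

theorem exists_mem_forall_inv_mul_mem {M : Submonoid G} {K : Subgroup G} (hK : K ≤ center G)
    {A : Set G} (hfin : A.Finite) (h : ∀ a ∈ A, ∃ z ∈ K, z ∈ M ∧ a⁻¹ * z ∈ M) :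
    ∃ ζ ∈ K, ζ ∈ M ∧ ∀ a ∈ A, a⁻¹ * ζ ∈ M := by
  induction A, hfin using Set.Finite.induction_on with
  | empty => exact ⟨1, K.one_mem, M.one_mem, by simp⟩
  | @insert b B _ _ ih =>
    obtain ⟨ζ, hζK, hζM, hB⟩ := ih fun a ha => h a (Set.mem_insert_of_mem b ha)
    obtain ⟨z, hzK, hzM, hbz⟩ := h b (Set.mem_insert b B)
    refine ⟨ζ * z, K.mul_mem hζK hzK, M.mul_mem hζM hzM, ?_⟩
    rintro a (rfl | ha)
    · rw [mem_center_iff.mp (hK hzK) ζ, ← mul_assoc]; exact M.mul_mem hbz hζM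
    · rw [← mul_assoc]; exact M.mul_mem (hB a ha) hzM

theorem inv_mem_closure_image_mul_commutator {H : Type*} [Group H] {f : G →* H}
    (hf : Function.Surjective f) {A : Set G} {a : G}
    (ha : a⁻¹ ∈ (Submonoid.closure A : Set G) * commutator G) :
    (f a)⁻¹ ∈ (Submonoid.closure (f '' A) : Set H) * commutator H := by
  obtain ⟨m, hm, k, hk, hmk : m * k = a⁻¹⟩ := ha
  refine ⟨f m, ?_, f k, ?_, show f m * f k = (f a)⁻¹ from ?_⟩
  · rw [← MonoidHom.map_mclosure]; exact Submonoid.mem_map_of_mem f hm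
  · rw [_root_.commutator_def, ← map_top_of_surjective f hf, ← map_commutator]
    exact mem_map_of_mem f hk
  · rw [← map_mul, hmk, map_inv]

end

theorem forall_inv_mem_submonoidClosure_of_lowerCentralSeries_eq_bot (c : ℕ) {G : Type*}
    [Group G] {A : Set G} (hfin : A.Finite) (hA : closure A = ⊤)
    (hc : (⊤ : Subgroup G).lowerCentralSeries (c + 1) = ⊥)
    (hinv : ∀ a ∈ A, a⁻¹ ∈ (Submonoid.closure A : Set G) * commutator G) :
    ∀ a ∈ A, a⁻¹ ∈ Submonoid.closure A := by
  induction c generalizing G with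
  | zero =>
    intro a ha
    obtain ⟨m, hm, k, hk, hmk : m * k = a⁻¹⟩ := hinv a ha
    rw [top_lowerCentralSeries_one] at hc
    rw [hc, SetLike.mem_coe, mem_bot] at hk
    rwa [← hmk, hk, mul_one]
  | succ c ih =>
    set K := (⊤ : Subgroup G).lowerCentralSeries (c + 1)
    have hK : K ≤ center G := commutator_top_right_eq_bot_iff_le_center.mp hc
    let π := QuotientGroup.mk' K
    have hπ : Function.Surjective π := QuotientGroup.mk'_surjective K
    have hcQ : (⊤ : Subgroup (G ⧸ K)).lowerCentralSeries (c + 1) = ⊥ := by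
      rw [← map_top_of_surjective π hπ, ← map_lowerCentralSeries, Subgroup.map_eq_bot_iff,
        QuotientGroup.ker_mk']
    have hlift := ih (hfin.image π)
      (by rw [← MonoidHom.map_closure, hA, map_top_of_surjective π hπ]) hcQ
      (Set.forall_mem_image.mpr fun a ha => inv_mem_closure_image_mul_commutator hπ (hinv a ha))
    have hζ : ∀ a ∈ A, ∃ z ∈ K, z ∈ Submonoid.closure A ∧ a⁻¹ * z ∈ Submonoid.closure A := by
      intro a ha
      obtain ⟨m, hm, hma⟩ : (π a)⁻¹ ∈ (Submonoid.closure A).map π := by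
        rw [MonoidHom.map_mclosure]; exact hlift (π a) (Set.mem_image_of_mem π ha)
      refine ⟨a * m, ?_, (Submonoid.closure A).mul_mem (Submonoid.subset_closure ha) hm,
        by rwa [inv_mul_cancel_left]⟩
      rw [← QuotientGroup.ker_mk' K, MonoidHom.mem_ker, map_mul, hma, mul_inv_cancel]
    obtain ⟨ζ, hζK, hζM, hAζ⟩ := exists_mem_forall_inv_mul_mem hK hfin hζ
    have hζinv := inv_mem_of_mem_commutator hA Submonoid.subset_closure hK hζK hζM hAζ
    intro a ha
    simpa using (Submonoid.closure A).mul_mem (hAζ a ha) hζinv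

theorem forall_inv_mem_submonoidClosure_of_isNilpotent {G : Type*} [Group G]
    [Group.IsNilpotent G] {A : Set G} (hfin : A.Finite)
    (hinv : ∀ a ∈ A, a⁻¹ ∈ (Submonoid.closure A : Set G) * ⁅closure A, closure A⁆) :
    ∀ a ∈ A, a⁻¹ ∈ Submonoid.closure A := by
  set H := closure A
  set A' : Set H := (↑) ⁻¹' A
  have hM : (Submonoid.closure A').map H.subtype = Submonoid.closure A := by
    rw [MonoidHom.map_mclosure, coe_subtype,
      Set.image_preimage_eq_of_subset (by rw [Subtype.range_coe]; exact subset_closure)]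
  have hinv' : ∀ a ∈ A', a⁻¹ ∈ (Submonoid.closure A' : Set H) * commutator H := by
    intro a ha
    rw [← H.subtype_injective.mem_set_image, Set.image_mul]
    have := hinv a ha
    rw [← map_subtype_commutator, ← hM, Subgroup.coe_map, Submonoid.coe_map] at this
    exact this
  have hc : (⊤ : Subgroup H).lowerCentralSeries (Group.nilpotencyClass H + 1) = ⊥ :=
    Subgroup.lowerCentralSeries_eq_bot_iff_nilpotencyClass_le.mpr (Nat.le_succ _)
  have hA' := forall_inv_mem_submonoidClosure_of_lowerCentralSeries_eq_bot _
    (hfin.preimage Subtype.val_injective.injOn) closure_closure_coe_preimage hc hinv'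
  intro a ha
  rw [← hM]
  exact ⟨(⟨a, subset_closure ha⟩ : H)⁻¹, hA' _ ha, rfl⟩

theorem coe_submonoidClosure_eq_closure_of_forall_inv_mem {G : Type*} [Group G] {A : Set G}
    (h : ∀ a ∈ A, a⁻¹ ∈ Submonoid.closure A) :
    (Submonoid.closure A : Set G) = closure A := by
  refine congrArg SetLike.coe (le_antisymm ?_ ?_)
  · exact Submonoid.closure_le.mpr subset_closure
  · rw [closure_toSubmonoid, Submonoid.closure_le]
    exact Set.union_subset Submonoid.subset_closure fun a ha => by simpa using h _ ha

theorem stmt_18_general {G : Type*} [Group G] [Group.IsNilpotent G]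
    (A : Finset G)
    (hinv : ∀ a ∈ A, a⁻¹ ∈
      ((Submonoid.closure (A : Set G) : Submonoid G) : Set G) *
        ((⁅Subgroup.closure (A : Set G), Subgroup.closure (A : Set G)⁆ : Subgroup G) :
          Set G)) :
    ((Submonoid.closure (A : Set G) : Submonoid G) : Set G) =
      ((Subgroup.closure (A : Set G) : Subgroup G) : Set G) :=
  coe_submonoidClosure_eq_closure_of_forall_inv_mem
    (forall_inv_mem_submonoidClosure_of_isNilpotent A.finite_toSet hinv)

theorem stmt_18 {G : Type*} [Group G] [Group.FG G] [Group.IsNilpotent G]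
    (A : Finset G)
    (hinv : ∀ a ∈ A, a⁻¹ ∈
      ((Submonoid.closure (A : Set G) : Submonoid G) : Set G) *
        ((⁅Subgroup.closure (A : Set G), Subgroup.closure (A : Set G)⁆ : Subgroup G) :
          Set G)) :
    ((Submonoid.closure (A : Set G) : Submonoid G) : Set G) =
      ((Subgroup.closure (A : Set G) : Subgroup G) : Set G) :=
  stmt_18_general A hinv
end

section
/- Let G be a finitely generated nilpotent group, M a submonoid, and Z a central subgroup of G generated by finitely many elements z₁, ..., zₙ each of which is a commutator [x,y] with x ∈ G, y ∈ G. If MZ is a finite-index subgroup of G, then M is a finite-index subgroup of G. -/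
/-!
Adjoining the generators one at a time (`M ↦ M⟨z₁, …, zₖ⟩` is again a submonoid, as `Z` is
central) reduces everything to `Z = ⟨c⟩` with `c = [x, y]` central. Pick `x ^ p, y ^ q ∈ M⟨c⟩`
and write `x ^ (± p) = m c ^ e`, `y ^ (± q) = m' c ^ e'` with `m, m' ∈ M`. Since
`[x ^ (p t), y ^ (q t)] = c ^ (p q t²)`, a product of four elements of `M` equals
`c ^ (p q t² + s t)` for a fixed `s`, which is a positive power of `c` for large `t`; swapping
`x` and `y` gives a negative one. So `M ⊇ ⟨c ^ n⟩` for some `n > 0`, which makes `M` closed under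
inverses and covers `M⟨c⟩` by the `n` translates `M c ^ i`.
-/

open scoped Pointwise

section

open Subgroup

variable {G : Type*}

def IsFiniteIndexSubgroup [Group G] (S : Set G) : Prop :=
  ∃ H : Subgroup G, (H : Set G) = S ∧ H.FiniteIndex

theorem Submonoid.coe_sup_of_le_center [Monoid G] (M N : Submonoid G)
    (hN : N ≤ Submonoid.center G) : ((M ⊔ N : Submonoid G) : Set G) = M * N := by
  let MN : Submonoid G :=
    { carrier := M * N
      one_mem' := ⟨1, M.one_mem, 1, N.one_mem, one_mul 1⟩
      mul_mem' := by
        rintro _ _ ⟨m, hm, n, hn, rfl⟩ ⟨m', hm', n', hn', rfl⟩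
        have hnm' : Commute n m' := (Submonoid.mem_center_iff.mp (hN hn) m').symm
        exact ⟨m * m', mul_mem hm hm', n * n', mul_mem hn hn', (hnm'.mul_mul_mul_comm m n').symm⟩ }
  have hle : M ⊔ N ≤ MN :=
    sup_le (fun m hm => ⟨m, hm, 1, N.one_mem, mul_one m⟩)
      fun n hn => ⟨1, M.one_mem, n, hn, one_mul n⟩
  exact Set.Subset.antisymm hle <| Set.mul_subset_iff.2 fun m hm n hn =>
    mul_mem (Submonoid.mem_sup_left hm) (Submonoid.mem_sup_right hn)

namespace Subgroup

variable [Group G]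

theorem normal_of_le_center_s19 {N : Subgroup G} (hN : N ≤ center G) : N.Normal :=
  ⟨fun n hn g => by rwa [mem_center_iff.mp (hN hn) g, mul_inv_cancel_right]⟩

theorem commute_of_mem_center {z : G} (hz : z ∈ center G) (g : G) : Commute g z :=
  mem_center_iff.mp hz g

theorem relIndex_ne_zero_of_forall_inv_mul_mem {K H : Subgroup G} {ι : Type*} [Finite ι]
    (g : ι → H) (hg : ∀ h ∈ H, ∃ i, (g i : G)⁻¹ * h ∈ K) : K.relIndex H ≠ 0 := by
  have : Finite (H ⧸ K.subgroupOf H) := by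
    refine Finite.of_surjective (fun i => (g i : H ⧸ K.subgroupOf H)) fun q => ?_
    induction q using QuotientGroup.induction_on with
    | H h =>
      obtain ⟨i, hi⟩ := hg h h.2
      exact ⟨i, QuotientGroup.eq.mpr (mem_subgroupOf.mpr hi)⟩
  exact index_ne_zero_of_finite

end Subgroup

section CommutatorPowers

variable [Group G] {x y c : G}

theorem zpow_commutator_left (hc : x⁻¹ * y⁻¹ * x * y = c) (hx : Commute x c) (a : ℤ) :
    (x ^ a)⁻¹ * y⁻¹ * x ^ a * y = c ^ a := by
  have hconj : SemiconjBy y (x * c) x := by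
    rw [SemiconjBy, ← hc]; group
  have hconj_a := hconj.zpow_right a
  rw [SemiconjBy, hx.mul_zpow] at hconj_a
  rw [mul_assoc _ (x ^ a), ← hconj_a]
  group

theorem zpow_commutator_right (hc : x⁻¹ * y⁻¹ * x * y = c) (hy : Commute y c) (b : ℤ) :
    x⁻¹ * (y ^ b)⁻¹ * x * y ^ b = c ^ b := by
  have hc' : y⁻¹ * x⁻¹ * y * x = c⁻¹ := by rw [← hc]; group
  have h := zpow_commutator_left hc' hy.inv_right b
  rw [← inv_inj, ← inv_zpow c, ← h]
  group

theorem zpow_commutator_zpow (hc : x⁻¹ * y⁻¹ * x * y = c) (hx : Commute x c) (hy : Commute y c)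
    (a b : ℤ) : (x ^ a)⁻¹ * (y ^ b)⁻¹ * x ^ a * y ^ b = c ^ (a * b) := by
  rw [zpow_mul]
  exact zpow_commutator_right (zpow_commutator_left hc hx a) (hy.zpow_right a) b

end CommutatorPowers

section Descent

variable [Group G] {M : Submonoid G} {H : Subgroup G} {c : G}

theorem mul_zpow_mul_mul_zpow (hc : c ∈ center G) (g h : G) (i j : ℤ) :
    g * c ^ i * (h * c ^ j) = g * h * c ^ (i + j) := by
  have hci : Commute (c ^ i) h := (commute_of_mem_center hc h).symm.zpow_left i
  rw [hci.mul_mul_mul_comm, zpow_add]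

theorem pow_mul_zpow_mem (hc : c ∈ center G) {g : G} {e : ℤ} (hg : g * c ^ e ∈ M) (t : ℕ) :
    g ^ t * c ^ (e * t) ∈ M := by
  have hgc : Commute g (c ^ e) := (commute_of_mem_center hc g).zpow_right e
  rw [zpow_mul, zpow_natCast, ← hgc.mul_pow]
  exact pow_mem hg t

theorem commutator_mul_zpow_mem (hc : c ∈ center G) {a b : G} {d α α' β β' : ℤ}
    (hab : a⁻¹ * b⁻¹ * a * b = c ^ d) (ha' : a⁻¹ * c ^ α' ∈ M) (hb' : b⁻¹ * c ^ β' ∈ M)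
    (ha : a * c ^ α ∈ M) (hb : b * c ^ β ∈ M) : c ^ (d + (α' + β' + α + β)) ∈ M := by
  have h := mul_mem (mul_mem (mul_mem ha' hb') ha) hb
  rwa [mul_zpow_mul_mul_zpow hc, mul_zpow_mul_mul_zpow hc, mul_zpow_mul_mul_zpow hc, hab,
    ← zpow_add] at h

theorem exists_mul_zpow_mem (hH : (H : Set G) = M * zpowers c) {h : G} (hh : h ∈ H) :
    ∃ e : ℤ, h * c ^ e ∈ M := by
  rw [← SetLike.mem_coe, hH] at hh
  obtain ⟨m, hm, _, ⟨j, rfl⟩, rfl⟩ := hh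
  exact ⟨-j, by simpa using hm⟩

theorem exists_pos_pow_mem_of_commutator (hc : c ∈ center G) (hH : (H : Set G) = M * zpowers c)
    {a b : G} (ha : a ∈ H) (hb : b ∈ H) {d : ℤ} (hd : 0 < d) (hab : a⁻¹ * b⁻¹ * a * b = c ^ d) :
    ∃ n : ℕ, 0 < n ∧ c ^ n ∈ M := by
  obtain ⟨α, hα⟩ := exists_mul_zpow_mem hH ha
  obtain ⟨α', hα'⟩ := exists_mul_zpow_mem hH (inv_mem ha)
  obtain ⟨β, hβ⟩ := exists_mul_zpow_mem hH hb
  obtain ⟨β', hβ'⟩ := exists_mul_zpow_mem hH (inv_mem hb)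
  set s := α' + β' + α + β
  have hmem (t : ℕ) : c ^ (d * (t * t) + s * t) ∈ M := by
    have habt := zpow_commutator_zpow hab ((commute_of_mem_center hc a).zpow_right d)
      ((commute_of_mem_center hc b).zpow_right d) t t
    simp only [zpow_natCast, ← zpow_mul] at habt
    have h := commutator_mul_zpow_mem hc habt (by simpa [inv_pow] using pow_mul_zpow_mem hc hα' t)
      (by simpa [inv_pow] using pow_mul_zpow_mem hc hβ' t) (pow_mul_zpow_mem hc hα t)
      (pow_mul_zpow_mem hc hβ t)
    convert h using 2
    ring
  -- with `t = |s| + 1` the quadratic term dominates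
  set t := s.natAbs + 1
  have ht : (t : ℤ) = |s| + 1 := by push_cast [t, Int.natCast_natAbs]; rfl
  have hpos : 0 < d * (t * t) + s * t := by
    nlinarith [neg_abs_le s, abs_nonneg s]
  obtain ⟨n, hn⟩ := Int.eq_ofNat_of_zero_le hpos.le
  exact ⟨n, by omega, by rw [← zpow_natCast, ← hn]; exact hmem t⟩

theorem exists_pos_pow_mem (hc : c ∈ center G) {x y : G} (hxy : x⁻¹ * y⁻¹ * x * y = c)
    (hH : (H : Set G) = M * zpowers c) (hfi : H.FiniteIndex) : ∃ n : ℕ, 0 < n ∧ c ^ n ∈ M := by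
  obtain ⟨p, hp, -, hxp⟩ := exists_pow_mem_of_index_ne_zero hfi.index_ne_zero x
  obtain ⟨q, hq, -, hyq⟩ := exists_pow_mem_of_index_ne_zero hfi.index_ne_zero y
  have hpq := zpow_commutator_zpow hxy (commute_of_mem_center hc x) (commute_of_mem_center hc y) p q
  simp only [zpow_natCast] at hpq
  exact exists_pos_pow_mem_of_commutator hc hH hxp hyq (by positivity) hpq

theorem exists_pow_mem_and_inv_pow_mem (hc : c ∈ center G) {x y : G}
    (hxy : x⁻¹ * y⁻¹ * x * y = c) (hH : (H : Set G) = M * zpowers c) (hfi : H.FiniteIndex) :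
    ∃ n : ℕ, 0 < n ∧ c ^ n ∈ M ∧ c⁻¹ ^ n ∈ M := by
  obtain ⟨p, hp, hcp⟩ := exists_pos_pow_mem hc hxy hH hfi
  have hyx : y⁻¹ * x⁻¹ * y * x = c⁻¹ := by rw [← hxy]; group
  obtain ⟨q, hq, hcq⟩ :=
    exists_pos_pow_mem (inv_mem hc) hyx (by rwa [zpowers_inv]) hfi
  refine ⟨p * q, Nat.mul_pos hp hq, ?_, ?_⟩
  · rw [pow_mul]; exact pow_mem hcp q
  · rw [mul_comm, pow_mul]; exact pow_mem hcq p

theorem zpow_mul_mem {n : ℕ} (hn : c ^ n ∈ M) (hn' : c⁻¹ ^ n ∈ M) (j : ℤ) : c ^ (n * j) ∈ M := by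
  obtain ⟨k, rfl | rfl⟩ := Int.eq_nat_or_neg j
  · rw [zpow_mul, zpow_natCast, zpow_natCast]
    exact pow_mem hn k
  · rw [mul_neg, zpow_neg, zpow_mul, zpow_natCast, zpow_natCast, ← inv_pow, ← inv_pow]
    exact pow_mem hn' k

theorem zpow_mem_of_zpow_neg_mem {n : ℕ} (hn : 0 < n) (hM : ∀ j : ℤ, c ^ (n * j) ∈ M) {j : ℤ}
    (hj : c ^ (-j) ∈ M) : c ^ j ∈ M := by
  have hsplit : c ^ j = (c ^ (-j)) ^ (n - 1) * c ^ (n * j) := by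
    rw [← zpow_natCast, ← zpow_mul, ← zpow_add]
    congr 1
    push_cast [Nat.cast_sub hn]
    ring
  rw [hsplit]
  exact mul_mem (pow_mem hj _) (hM j)

theorem inv_mem_of_zpow_mul_mem (hH : (H : Set G) = M * zpowers c) {n : ℕ}
    (hn : 0 < n) (hM : ∀ j : ℤ, c ^ (n * j) ∈ M) {m : G} (hm : m ∈ M) : m⁻¹ ∈ M := by
  have hmH : m ∈ H := by rw [← SetLike.mem_coe, hH]; exact ⟨m, hm, 1, one_mem _, mul_one m⟩
  obtain ⟨e, he⟩ := exists_mul_zpow_mem hH (inv_mem hmH)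
  have hce : c ^ e ∈ M := by simpa using mul_mem hm he
  have hce' : c ^ (-e) ∈ M := zpow_mem_of_zpow_neg_mem hn hM (by rwa [neg_neg])
  simpa using mul_mem he hce'

theorem isFiniteIndexSubgroup_of_mul_zpowers_commutator (hc : c ∈ center G) {x y : G}
    (hxy : x⁻¹ * y⁻¹ * x * y = c) (h : IsFiniteIndexSubgroup ((M : Set G) * (zpowers c : Set G))) :
    IsFiniteIndexSubgroup (M : Set G) := by
  obtain ⟨H, hH, hfi⟩ := h
  obtain ⟨n, hn, hcn, hcn'⟩ := exists_pow_mem_and_inv_pow_mem hc hxy hH hfi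
  have hM := zpow_mul_mem hcn hcn'
  let K : Subgroup G := { M with inv_mem' := inv_mem_of_zpow_mul_mem hH hn hM }
  have hzH (k : ℤ) : c ^ k ∈ H := by
    rw [← SetLike.mem_coe, hH]; exact ⟨1, one_mem M, c ^ k, ⟨k, rfl⟩, one_mul _⟩
  have hKH : K ≤ H := fun m hm => by
    rw [← SetLike.mem_coe, hH]; exact ⟨m, hm, 1, one_mem _, mul_one m⟩
  have hcover (h : G) (hh : h ∈ H) : ∃ i : Set.Ico (0 : ℤ) n, (c ^ (i : ℤ))⁻¹ * h ∈ K := by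
    obtain ⟨e, he⟩ := exists_mul_zpow_mem hH hh
    have hn' : (n : ℤ) ≠ 0 := by omega
    refine ⟨⟨-e % n, Int.emod_nonneg _ hn', Int.emod_lt_of_pos _ (by omega)⟩, ?_⟩
    have hrepr : (c ^ (-e % n))⁻¹ * h = h * c ^ e * c ^ (n * (-e / n)) := by
      rw [((commute_of_mem_center hc h).zpow_right _).inv_right.symm.eq, ← zpow_neg, mul_assoc,
        ← zpow_add, Int.emod_def]
      ring_nf
    rw [hrepr]
    exact mul_mem he (hM _)
  refine ⟨K, rfl, ⟨?_⟩⟩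
  rw [← relIndex_mul_index hKH]
  have hrel : K.relIndex H ≠ 0 :=
    relIndex_ne_zero_of_forall_inv_mul_mem (fun i : Set.Ico (0 : ℤ) n => ⟨_, hzH i⟩) hcover
  exact mul_ne_zero hrel hfi.index_ne_zero

end Descent

theorem isFiniteIndexSubgroup_of_mul_closure_commutators [Group G] {S : Set G} (hS : S.Finite)
    (hcent : S ⊆ center G) (hcomm : ∀ s ∈ S, ∃ x y : G, s = x⁻¹ * y⁻¹ * x * y)
    (M : Submonoid G) (h : IsFiniteIndexSubgroup ((M : Set G) * (closure S : Set G))) :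
    IsFiniteIndexSubgroup (M : Set G) := by
  induction S, hS using Set.Finite.induction_on generalizing M with
  | empty => simpa using h
  | @insert a s _ _ ih =>
    have hs : (closure s).toSubmonoid ≤ Submonoid.center G :=
      (closure_le _).2 fun g hg => hcent (Set.mem_insert_of_mem a hg)
    have ha : a ∈ center G := hcent (Set.mem_insert a s)
    have : (zpowers a).Normal := normal_of_le_center_s19 (zpowers_le.2 ha)
    have hsup : ((M ⊔ (closure s).toSubmonoid : Submonoid G) : Set G) =
        (M : Set G) * (closure s : Set G) := Submonoid.coe_sup_of_le_center M _ hs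
    have hsplit : (M : Set G) * (closure (insert a s) : Set G) =
        ((M ⊔ (closure s).toSubmonoid : Submonoid G) : Set G) * (zpowers a : Set G) := by
      rw [hsup, mul_assoc, Set.insert_eq, Subgroup.closure_union, ← zpowers_eq_closure, sup_comm,
        mul_normal]
    obtain ⟨x, y, hxy⟩ := hcomm a (Set.mem_insert a s)
    exact ih (fun g hg => hcent (Set.mem_insert_of_mem a hg))
      (fun g hg => hcomm g (Set.mem_insert_of_mem a hg)) M
      (hsup ▸ isFiniteIndexSubgroup_of_mul_zpowers_commutator ha hxy.symm (hsplit ▸ h))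

end

theorem stmt_19_general {G : Type*} [Group G]
    (M : Submonoid G) (Z : Subgroup G) (hZcent : Z ≤ Subgroup.center G)
    {n : ℕ} (z : Fin n → G)
    (hcomm : ∀ i, ∃ x y : G, z i = x⁻¹ * y⁻¹ * x * y)
    (hgen : Subgroup.closure (Set.range z) = Z)
    (h : ∃ H : Subgroup G, (H : Set G) = (M : Set G) * (Z : Set G) ∧ H.FiniteIndex) :
    ∃ K : Subgroup G, (K : Set G) = (M : Set G) ∧ K.FiniteIndex := by
  subst hgen
  exact isFiniteIndexSubgroup_of_mul_closure_commutators (Set.finite_range z)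
    (Subgroup.subset_closure.trans hZcent) (Set.forall_mem_range.2 hcomm) M h

theorem stmt_19 {G : Type*} [Group G] [Group.FG G] [Group.IsNilpotent G]
    (M : Submonoid G) (Z : Subgroup G) (hZcent : Z ≤ Subgroup.center G)
    {n : ℕ} (z : Fin n → G)
    (hcomm : ∀ i, ∃ x y : G, z i = x⁻¹ * y⁻¹ * x * y)
    (hgen : Subgroup.closure (Set.range z) = Z)
    (h : ∃ H : Subgroup G, (H : Set G) = (M : Set G) * (Z : Set G) ∧ H.FiniteIndex) :
    ∃ K : Subgroup G, (K : Set G) = (M : Set G) ∧ K.FiniteIndex :=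
  stmt_19_general M Z hZcent z hcomm hgen h
end
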